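/- arXiv:0904.3592 — 11 statements merged into one kernel-verified Lean document; each statement's English description precedes it below -/
import Mathlib

section
/- Assume the GO condition holds. Let m = p ⊕ q be a decomposition into subspaces with [h, p] ⊆ p, [h, q] ⊆ q and ⟨A p, q⟩ = 0 (a g-orthogonal ad_h-invariant decomposition). Then ⟨[X, Y], A Y⟩ = 0 and ⟨[Y, X], A X⟩ = 0 for all X ∈ p and Y ∈ q; that is, for each X ∈ p the operator ad_X is skew-symmetric on q with respect to the metric ⟨A·,·⟩, and symmetrically (equivalently U(p,p) ⊆ p and U(q,q) ⊆ q for the symmetric connection term U). -/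
/-!
By ad-invariance, `B ⁅X, Y⁆ (A Y) = B ⁅Y, A Y⁆ X`. The GO condition for `Y` gives `H ∈ h` with
`⁅H + Y, A Y⁆ ∈ h`, which is `B`-orthogonal to `X ∈ m`; hence `B ⁅Y, A Y⁆ X = B (A Y) ⁅H, X⁆`,
and this vanishes because `⁅H, X⁆` stays in `p`, which is `⟨A ·, ·⟩`-orthogonal to `q ∋ Y`.
The second identity is the same argument with `p` and `q` exchanged.
-/

section InvariantForm

variable {R g : Type*} [CommRing R] [LieRing g] [LieAlgebra R g] {B : g →ₗ[R] g →ₗ[R] R}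

theorem invariant_form_lie_left (hBinv : ∀ Z X Y : g, B ⁅Z, X⁆ Y + B X ⁅Z, Y⁆ = 0)
    (X Y Z : g) : B ⁅X, Y⁆ Z = -B Y ⁅X, Z⁆ :=
  eq_neg_of_add_eq_zero_left (hBinv X Y Z)

theorem invariant_form_lie_assoc (hBinv : ∀ Z X Y : g, B ⁅Z, X⁆ Y + B X ⁅Z, Y⁆ = 0)
    (X Y Z : g) : B ⁅X, Y⁆ Z = B X ⁅Y, Z⁆ := by
  rw [← lie_skew, map_neg, LinearMap.neg_apply, invariant_form_lie_left hBinv, neg_neg]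

theorem invariant_form_lie_eq_of_lie_add_mem (hBsymm : ∀ X Y : g, B X Y = B Y X)
    (hBinv : ∀ Z X Y : g, B ⁅Z, X⁆ Y + B X ⁅Z, Y⁆ = 0) {h : LieSubalgebra R g} {H W V Z : g}
    (hHWV : ⁅H + W, V⁆ ∈ h) (hZ : ∀ K ∈ h, B Z K = 0) :
    B ⁅W, V⁆ Z = B V ⁅H, Z⁆ := by
  have hzero : B ⁅H + W, V⁆ Z = 0 := by
    rw [hBsymm]
    exact hZ _ hHWV
  rw [add_lie, map_add, LinearMap.add_apply, invariant_form_lie_left hBinv] at hzero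
  linear_combination hzero

theorem invariant_form_lie_metric_self_eq_zero_of_geodesicOrbit
    (hBsymm : ∀ X Y : g, B X Y = B Y X)
    (hBinv : ∀ Z X Y : g, B ⁅Z, X⁆ Y + B X ⁅Z, Y⁆ = 0) {h : LieSubalgebra R g}
    {m p q : Submodule R g} {A : g →ₗ[R] g} (hm : ∀ Z ∈ m, ∀ K ∈ h, B Z K = 0)
    (hGO : ∀ X ∈ m, ∃ H ∈ h, ⁅H + X, A X⁆ ∈ h) (hpm : p ≤ m) (hqm : q ≤ m)
    (hph : ∀ H ∈ h, ∀ X ∈ p, ⁅H, X⁆ ∈ p) (horth : ∀ W ∈ q, ∀ Z ∈ p, B (A W) Z = 0)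
    {W Z : g} (hW : W ∈ q) (hZ : Z ∈ p) : B ⁅W, A W⁆ Z = 0 := by
  obtain ⟨H, hH, hHW⟩ := hGO W (hqm hW)
  rw [invariant_form_lie_eq_of_lie_add_mem hBsymm hBinv hHW (hm Z (hpm hZ))]
  exact horth W hW _ (hph H hH Z hZ)

end InvariantForm

theorem stmt_2_general
    {g : Type*} [LieRing g] [LieAlgebra ℝ g]
    (B : g →ₗ[ℝ] g →ₗ[ℝ] ℝ)
    (hBsymm : ∀ X Y : g, B X Y = B Y X)
    (hBinv : ∀ Z X Y : g, B ⁅Z, X⁆ Y + B X ⁅Z, Y⁆ = 0)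
    (h : LieSubalgebra ℝ g)
    (m : Submodule ℝ g) (hm : ∀ X : g, X ∈ m ↔ ∀ H ∈ h, B X H = 0)
    (A : g →ₗ[ℝ] g)
    (hAsymm : ∀ X ∈ m, ∀ Y ∈ m, B (A X) Y = B X (A Y))
    (hGO : ∀ X ∈ m, ∃ H ∈ h, ⁅H + X, A X⁆ ∈ h)
    (p q : Submodule ℝ g) (hpm : p ≤ m) (hqm : q ≤ m)
    (hph : ∀ H ∈ h, ∀ X ∈ p, ⁅H, X⁆ ∈ p)
    (hqh : ∀ H ∈ h, ∀ Y ∈ q, ⁅H, Y⁆ ∈ q)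
    (horth : ∀ X ∈ p, ∀ Y ∈ q, B (A X) Y = 0) :
    ∀ X ∈ p, ∀ Y ∈ q, B ⁅X, Y⁆ (A Y) = 0 ∧ B ⁅Y, X⁆ (A X) = 0 := by
  have hmh : ∀ Z ∈ m, ∀ H ∈ h, B Z H = 0 := fun Z hZ => (hm Z).1 hZ
  have horth' : ∀ Y ∈ q, ∀ X ∈ p, B (A Y) X = 0 := fun Y hY X hX => by
    rw [hAsymm Y (hqm hY) X (hpm hX), hBsymm, horth X hX Y hY]
  intro X hX Y hY
  constructor
  · rw [invariant_form_lie_assoc hBinv, hBsymm]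
    exact invariant_form_lie_metric_self_eq_zero_of_geodesicOrbit hBsymm hBinv hmh hGO hpm hqm
      hph horth' hY hX
  · rw [invariant_form_lie_assoc hBinv, hBsymm]
    exact invariant_form_lie_metric_self_eq_zero_of_geodesicOrbit hBsymm hBinv hmh hGO hqm hpm
      hqh horth hX hY

/-- For a `g`-orthogonal `ad h`-invariant decomposition `m = p ⊕ q` of a GO-space, `ad X` is skew-symmetric on `q` for `X ∈ p`, and vice versa. -/
theorem stmt_2
    {g : Type*} [LieRing g] [LieAlgebra ℝ g] [FiniteDimensional ℝ g]
    (B : g →ₗ[ℝ] g →ₗ[ℝ] ℝ)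
    (hBsymm : ∀ X Y : g, B X Y = B Y X)
    (hBpos : ∀ X : g, X ≠ 0 → 0 < B X X)
    (hBinv : ∀ Z X Y : g, B ⁅Z, X⁆ Y + B X ⁅Z, Y⁆ = 0)
    (h : LieSubalgebra ℝ g)
    (m : Submodule ℝ g) (hm : ∀ X : g, X ∈ m ↔ ∀ H ∈ h, B X H = 0)
    (A : g →ₗ[ℝ] g)
    (hAm : ∀ X ∈ m, A X ∈ m)
    (hAsymm : ∀ X ∈ m, ∀ Y ∈ m, B (A X) Y = B X (A Y))
    (hApos : ∀ X ∈ m, X ≠ 0 → 0 < B (A X) X)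
    (hAequiv : ∀ H ∈ h, ∀ X ∈ m, A ⁅H, X⁆ = ⁅H, A X⁆)
    (hGO : ∀ X ∈ m, ∃ H ∈ h, ⁅H + X, A X⁆ ∈ h)
    (p q : Submodule ℝ g) (hpm : p ≤ m) (hqm : q ≤ m)
    (hdisj : Disjoint p q) (hsup : p ⊔ q = m)
    (hph : ∀ H ∈ h, ∀ X ∈ p, ⁅H, X⁆ ∈ p)
    (hqh : ∀ H ∈ h, ∀ Y ∈ q, ⁅H, Y⁆ ∈ q)
    (horth : ∀ X ∈ p, ∀ Y ∈ q, B (A X) Y = 0) :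
    ∀ X ∈ p, ∀ Y ∈ q, B ⁅X, Y⁆ (A Y) = 0 ∧ B ⁅Y, X⁆ (A X) = 0 :=
  stmt_2_general B hBsymm hBinv h m hm A hAsymm hGO p q hpm hqm hph hqh horth
end

section
/- Assume the GO condition holds. If X, Y ∈ m are eigenvectors of A with A X = λ X, A Y = μ Y and λ ≠ μ, then there exists H ∈ h such that (λ − μ)[X, Y] = λ [H, X] + μ [H, Y]. -/
/-!
Apply the GO condition to `X + Y`: it gives `H ∈ h` with
`[H + X + Y, λX + μY] = λ[H,X] + μ[H,Y] - (λ - μ)[X,Y] ∈ h`.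
This vector also lies in `m`: `[h, m] ⊆ m` by invariance, and `[X, Y] ∈ m` because
`B([X,Y], W) = B(Y, [W,X])` for `W ∈ h`, where `[W,X]` is a `λ`-eigenvector of the
symmetric map `A` and hence orthogonal to the `μ`-eigenvector `Y`.
Since `h ∩ m = 0`, the vector vanishes.
-/

section

variable {R L : Type*} [CommRing R] [LieRing L] [LieAlgebra R L]

theorem lie_mem_of_mem_orthogonal (B : L →ₗ[R] L →ₗ[R] R)
    (hBinv : ∀ Z X Y : L, B ⁅Z, X⁆ Y + B X ⁅Z, Y⁆ = 0)
    (h : LieSubalgebra R L) (m : Submodule R L) (hm : ∀ X : L, X ∈ m ↔ ∀ H ∈ h, B X H = 0)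
    {W V : L} (hW : W ∈ h) (hV : V ∈ m) : ⁅W, V⁆ ∈ m := by
  refine (hm _).mpr fun H hH => ?_
  have hVH : B V ⁅W, H⁆ = 0 := (hm V).mp hV _ (h.lie_mem hW hH)
  linear_combination hBinv W V H - hVH

theorem lie_add_add_smul_add_smul (H X Y : L) (a b : R) :
    ⁅H + (X + Y), a • X + b • Y⁆ = a • ⁅H, X⁆ + b • ⁅H, Y⁆ - (a - b) • ⁅X, Y⁆ := by
  simp only [add_lie, lie_add, lie_smul, lie_self, sub_smul]
  rw [← lie_skew X Y]
  module

theorem eq_zero_of_mem_of_mem_orthogonal [PartialOrder R] (B : L →ₗ[R] L →ₗ[R] R)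
    (hBpos : ∀ X : L, X ≠ 0 → 0 < B X X)
    (h : LieSubalgebra R L) (m : Submodule R L) (hm : ∀ X : L, X ∈ m ↔ ∀ H ∈ h, B X H = 0)
    {Z : L} (hZh : Z ∈ h) (hZm : Z ∈ m) : Z = 0 := by
  by_contra hZ
  exact (hBpos Z hZ).ne' ((hm Z).mp hZm Z hZh)

end

theorem apply_eq_zero_of_eigenvalues_ne {K M : Type*} [Field K] [AddCommGroup M] [Module K M]
    (B : M →ₗ[K] M →ₗ[K] K) (m : Submodule K M)
    (A : M →ₗ[K] M) (hAsymm : ∀ X ∈ m, ∀ Y ∈ m, B (A X) Y = B X (A Y))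
    {lam mu : K} (hne : lam ≠ mu) {X Y : M} (hX : X ∈ m) (hY : Y ∈ m)
    (hXeig : A X = lam • X) (hYeig : A Y = mu • Y) : B X Y = 0 := by
  have hsymm := hAsymm X hX Y hY
  rw [hXeig, hYeig, map_smul, LinearMap.smul_apply, map_smul, smul_eq_mul, smul_eq_mul] at hsymm
  have : (lam - mu) * B X Y = 0 := by linear_combination hsymm
  exact (mul_eq_zero.mp this).resolve_left (sub_ne_zero.mpr hne)

theorem lie_mem_of_eigenvalues_ne {K L : Type*} [Field K] [LieRing L] [LieAlgebra K L]
    (B : L →ₗ[K] L →ₗ[K] K)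
    (hBinv : ∀ Z X Y : L, B ⁅Z, X⁆ Y + B X ⁅Z, Y⁆ = 0)
    (h : LieSubalgebra K L) (m : Submodule K L) (hm : ∀ X : L, X ∈ m ↔ ∀ H ∈ h, B X H = 0)
    (A : L →ₗ[K] L) (hAsymm : ∀ X ∈ m, ∀ Y ∈ m, B (A X) Y = B X (A Y))
    (hAequiv : ∀ H ∈ h, ∀ X ∈ m, A ⁅H, X⁆ = ⁅H, A X⁆)
    {lam mu : K} (hne : lam ≠ mu) {X Y : L} (hX : X ∈ m) (hY : Y ∈ m)
    (hXeig : A X = lam • X) (hYeig : A Y = mu • Y) : ⁅X, Y⁆ ∈ m := by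
  refine (hm _).mpr fun W hW => ?_
  have hWX : ⁅W, X⁆ ∈ m := lie_mem_of_mem_orthogonal B hBinv h m hm hW hX
  have hWXeig : A ⁅W, X⁆ = lam • ⁅W, X⁆ := by rw [hAequiv W hW X hX, hXeig, lie_smul]
  have hortho : B Y ⁅W, X⁆ = 0 :=
    apply_eq_zero_of_eigenvalues_ne B m A hAsymm hne.symm hY hWX hYeig hWXeig
  have hinv := hBinv X Y W
  rw [← lie_skew X W, map_neg, hortho, neg_zero, add_zero] at hinv
  exact hinv

/- The inner product is the bilinear form `B`; the metric endomorphism is a linear map `A` of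
`g` that is constrained only on `m`. -/

theorem stmt_3_general
    {g : Type*} [LieRing g] [LieAlgebra ℝ g]
    (B : g →ₗ[ℝ] g →ₗ[ℝ] ℝ)
    (hBpos : ∀ X : g, X ≠ 0 → 0 < B X X)
    (hBinv : ∀ Z X Y : g, B ⁅Z, X⁆ Y + B X ⁅Z, Y⁆ = 0)
    (h : LieSubalgebra ℝ g)
    (m : Submodule ℝ g) (hm : ∀ X : g, X ∈ m ↔ ∀ H ∈ h, B X H = 0)
    (A : g →ₗ[ℝ] g)
    (hAsymm : ∀ X ∈ m, ∀ Y ∈ m, B (A X) Y = B X (A Y))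
    (hAequiv : ∀ H ∈ h, ∀ X ∈ m, A ⁅H, X⁆ = ⁅H, A X⁆)
    (hGO : ∀ X ∈ m, ∃ H ∈ h, ⁅H + X, A X⁆ ∈ h)
    (lam mu : ℝ) (hne : lam ≠ mu)
    (X Y : g) (hX : X ∈ m) (hY : Y ∈ m)
    (hXeig : A X = lam • X) (hYeig : A Y = mu • Y) :
    ∃ H ∈ h, (lam - mu) • ⁅X, Y⁆ = lam • ⁅H, X⁆ + mu • ⁅H, Y⁆ := by
  obtain ⟨H, hH, hGOH⟩ := hGO (X + Y) (m.add_mem hX hY)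
  refine ⟨H, hH, (sub_eq_zero.mp ?_).symm⟩
  rw [map_add, hXeig, hYeig, lie_add_add_smul_add_smul] at hGOH
  have hHX := lie_mem_of_mem_orthogonal B hBinv h m hm hH hX
  have hHY := lie_mem_of_mem_orthogonal B hBinv h m hm hH hY
  have hXY := lie_mem_of_eigenvalues_ne B hBinv h m hm A hAsymm hAequiv hne hX hY hXeig hYeig
  refine eq_zero_of_mem_of_mem_orthogonal B hBpos h m hm hGOH ?_
  exact m.sub_mem (m.add_mem (m.smul_mem _ hHX) (m.smul_mem _ hHY)) (m.smul_mem _ hXY)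

/-- In a GO-space, for eigenvectors of `A` with different eigenvalues, `(λ − μ)[X,Y] = λ[H,X] + μ[H,Y]` for some `H ∈ h`. -/
theorem stmt_3
    {g : Type*} [LieRing g] [LieAlgebra ℝ g] [FiniteDimensional ℝ g]
    (B : g →ₗ[ℝ] g →ₗ[ℝ] ℝ)
    (hBsymm : ∀ X Y : g, B X Y = B Y X)
    (hBpos : ∀ X : g, X ≠ 0 → 0 < B X X)
    (hBinv : ∀ Z X Y : g, B ⁅Z, X⁆ Y + B X ⁅Z, Y⁆ = 0)
    (h : LieSubalgebra ℝ g)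
    (m : Submodule ℝ g) (hm : ∀ X : g, X ∈ m ↔ ∀ H ∈ h, B X H = 0)
    (A : g →ₗ[ℝ] g)
    (hAm : ∀ X ∈ m, A X ∈ m)
    (hAsymm : ∀ X ∈ m, ∀ Y ∈ m, B (A X) Y = B X (A Y))
    (hApos : ∀ X ∈ m, X ≠ 0 → 0 < B (A X) X)
    (hAequiv : ∀ H ∈ h, ∀ X ∈ m, A ⁅H, X⁆ = ⁅H, A X⁆)
    (hGO : ∀ X ∈ m, ∃ H ∈ h, ⁅H + X, A X⁆ ∈ h)
    (lam mu : ℝ) (hne : lam ≠ mu)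
    (X Y : g) (hX : X ∈ m) (hY : Y ∈ m)
    (hXeig : A X = lam • X) (hYeig : A Y = mu • Y) :
    ∃ H ∈ h, (lam - mu) • ⁅X, Y⁆ = lam • ⁅H, X⁆ + mu • ⁅H, Y⁆ :=
  stmt_3_general B hBpos hBinv h m hm A hAsymm hAequiv hGO lam mu hne X Y hX hY hXeig hYeig
end

section
/- Assume the GO condition holds. Let λ > 0 and let X, Y ∈ ker(A − λ·id) be such that ⟨X, [H, Y]⟩ = 0 for all H ∈ h (X is orthogonal to the subspace [h, Y]). Then ⟨[X, Y], Z⟩ = 0 for every eigenvector Z of A whose eigenvalue μ is different from λ; consequently [X, Y] ∈ h + ker(A − λ·id). -/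
/-!
Apply the GO condition to `X + Z`, where `A Z = μ • Z` with `μ ≠ λ`: it gives `H ∈ h` with
`⁅H + X + Z, λ • X + μ • Z⁆ ∈ h = mᗮ`. Pairing with `Y`, the term `⁅H, X⁆` drops out because
`X ⊥ ⁅h, Y⁆`, and `⁅H, Z⁆` drops out because it is a `μ`-eigenvector of `A` while `Y` is a
`λ`-eigenvector; what is left is `(μ - λ) B(Y, ⁅X, Z⁆) = 0`, and ad-invariance turns this into
`B(⁅X, Y⁆, Z) = 0`. For the second claim, the `m`-component `W` of `⁅X, Y⁆` is orthogonal to the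
eigenvectors of the symmetric operator `A|m` with eigenvalue `≠ λ`, so `A W - λ • W` is orthogonal
to every eigenvector and vanishes by the spectral theorem.
-/

open Module End

section Spectral

variable {𝕜 E : Type*} [RCLike 𝕜] [NormedAddCommGroup E] [InnerProductSpace 𝕜 E]
  [FiniteDimensional 𝕜 E]

theorem LinearMap.IsSymmetric.mem_eigenspace_of_inner_eq_zero {T : E →ₗ[𝕜] E}
    (hT : T.IsSymmetric) {μ₀ : 𝕜} {u : E}
    (hu : ∀ μ ≠ μ₀, ∀ z ∈ eigenspace T μ, inner 𝕜 z u = 0) : u ∈ eigenspace T μ₀ := by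
  have hperp : T u - μ₀ • u ∈ (⨆ μ, eigenspace T μ)ᗮ := by
    rw [← Submodule.iInf_orthogonal]
    refine (Submodule.mem_iInf _).2 fun μ z hz => ?_
    rw [inner_sub_right, inner_smul_right, ← hT z u, mem_eigenspace_iff.1 hz, inner_smul_left]
    by_cases hμ : μ = μ₀
    · subst hμ
      rcases eq_or_ne z 0 with rfl | hz0
      · simp
      · rw [hT.conj_eigenvalue_eq_self (hasEigenvalue_of_hasEigenvector ⟨hz, hz0⟩), sub_self]
    · rw [hu μ hμ z hz, mul_zero, mul_zero, sub_zero]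
  rw [hT.orthogonalComplement_iSup_eigenspaces_eq_bot, Submodule.mem_bot, sub_eq_zero] at hperp
  exact mem_eigenspace_iff.2 hperp

end Spectral

namespace LinearMap.BilinForm

variable {V : Type*} [AddCommGroup V] [Module ℝ V]

abbrev innerProductCore (B : LinearMap.BilinForm ℝ V) (hsymm : ∀ x y, B x y = B y x)
    (hpos : ∀ x, x ≠ 0 → 0 < B x x) : InnerProductSpace.Core ℝ V where
  inner x y := B x y
  conj_inner_symm x y := hsymm y x
  re_inner_nonneg x := by
    rcases eq_or_ne x 0 with rfl | hx
    · simp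
    · exact (hpos x hx).le
  add_left x y z := by simp
  smul_left x y r := by simp
  definite x hx := by_contra fun hx0 => (hpos x hx0).ne' hx

theorem eq_zero_of_eigenvalue_ne {K M : Type*} [Field K] [AddCommGroup M] [Module K M]
    (B : LinearMap.BilinForm K M) {A : M →ₗ[K] M} {Y Z : M} {lam mu : K}
    (hA : B (A Y) Z = B Y (A Z)) (hY : A Y = lam • Y) (hZ : A Z = mu • Z) (hne : mu ≠ lam) :
    B Y Z = 0 := by
  rw [hY, hZ, map_smul, map_smul, LinearMap.smul_apply, smul_eq_mul, smul_eq_mul] at hA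
  exact (mul_eq_zero.1 (by linear_combination -hA : (mu - lam) * B Y Z = 0)).resolve_left
    (sub_ne_zero.2 hne)

theorem mem_sup_inf_ker_of_forall_eigenvector [FiniteDimensional ℝ V]
    (B : LinearMap.BilinForm ℝ V)
    (hsymm : ∀ x y, B x y = B y x) (hpos : ∀ x, x ≠ 0 → 0 < B x x)
    (k m : Submodule ℝ V) (hm : ∀ X, X ∈ m ↔ ∀ H ∈ k, B X H = 0)
    {A : V →ₗ[ℝ] V} (hAm : ∀ X ∈ m, A X ∈ m)
    (hAsymm : ∀ X ∈ m, ∀ Y ∈ m, B (A X) Y = B X (A Y)) {lam : ℝ} {W : V}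
    (hW : ∀ Z ∈ m, ∀ mu : ℝ, mu ≠ lam → A Z = mu • Z → B W Z = 0) :
    W ∈ k ⊔ (m ⊓ LinearMap.ker (A - lam • LinearMap.id)) := by
  let _ : NormedAddCommGroup V := (B.innerProductCore hsymm hpos).toNormedAddCommGroup
  let _ : InnerProductSpace ℝ V :=
    InnerProductSpace.ofCore (B.innerProductCore hsymm hpos).toCore
  have hmk : m = kᗮ := by
    ext X
    rw [hm, Submodule.mem_orthogonal']
    rfl
  subst hmk
  obtain ⟨Wk, hWk, Wm, hWm, rfl⟩ := Submodule.exists_add_mem_mem_orthogonal (K := k) W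
  let T : kᗮ →ₗ[ℝ] kᗮ := A.restrict hAm
  have hT : T.IsSymmetric := fun x y => hAsymm x x.2 y y.2
  have hWmeig : (⟨Wm, hWm⟩ : kᗮ) ∈ eigenspace T lam := by
    refine hT.mem_eigenspace_of_inner_eq_zero fun mu hmu z hz => ?_
    have hAz : A z = mu • (z : V) := congrArg Subtype.val (mem_eigenspace_iff.1 hz)
    have hWz := hW z z.2 mu hmu hAz
    have hWkz : B Wk z = 0 := Submodule.inner_right_of_mem_orthogonal hWk z.2
    rw [map_add, LinearMap.add_apply, hWkz, zero_add] at hWz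
    change B z Wm = 0
    rw [hsymm, hWz]
  refine Submodule.add_mem_sup hWk ⟨hWm, ?_⟩
  have := congrArg Subtype.val (mem_eigenspace_iff.1 hWmeig)
  simpa [sub_eq_zero, T] using this

end LinearMap.BilinForm

section Lie

variable {R K g : Type*} [CommRing R] [LieRing g]

theorem lie_mem_of_forall_bilin_eq_zero [LieAlgebra R g] {B : LinearMap.BilinForm R g}
    (hBinv : ∀ Z X Y : g, B ⁅Z, X⁆ Y + B X ⁅Z, Y⁆ = 0) {h : LieSubalgebra R g}
    {m : Submodule R g} (hm : ∀ X : g, X ∈ m ↔ ∀ H ∈ h, B X H = 0) {H Z : g}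
    (hH : H ∈ h) (hZ : Z ∈ m) : ⁅H, Z⁆ ∈ m :=
  (hm _).2 fun H' hH' => by
    linear_combination hBinv H Z H' - (hm Z).1 hZ _ (h.lie_mem hH hH')

theorem lie_add_add_smul_add_smul_s4 [LieAlgebra R g] (H X Z : g) (lam mu : R) :
    ⁅H + (X + Z), lam • X + mu • Z⁆ = lam • ⁅H, X⁆ + mu • ⁅H, Z⁆ + (mu - lam) • ⁅X, Z⁆ := by
  simp only [lie_add, add_lie, lie_smul, lie_self, ← lie_skew Z X]
  module

theorem bilin_lie_eq_zero_of_eigenvalue_ne [Field K] [LieAlgebra K g]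
    {B : LinearMap.BilinForm K g} (hBsymm : ∀ X Y : g, B X Y = B Y X)
    (hBinv : ∀ Z X Y : g, B ⁅Z, X⁆ Y + B X ⁅Z, Y⁆ = 0) {h : LieSubalgebra K g}
    {m : Submodule K g} (hm : ∀ X : g, X ∈ m ↔ ∀ H ∈ h, B X H = 0) {A : g →ₗ[K] g}
    (hAsymm : ∀ X ∈ m, ∀ Y ∈ m, B (A X) Y = B X (A Y))
    (hAequiv : ∀ H ∈ h, ∀ X ∈ m, A ⁅H, X⁆ = ⁅H, A X⁆)
    (hGO : ∀ X ∈ m, ∃ H ∈ h, ⁅H + X, A X⁆ ∈ h) {lam mu : K} {X Y Z : g}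
    (hX : X ∈ m) (hY : Y ∈ m) (hZ : Z ∈ m) (hXeig : A X = lam • X) (hYeig : A Y = lam • Y)
    (hZeig : A Z = mu • Z) (hne : mu ≠ lam) (hXhY : ∀ H ∈ h, B X ⁅H, Y⁆ = 0) :
    B ⁅X, Y⁆ Z = 0 := by
  obtain ⟨H, hH, hGOXZ⟩ := hGO (X + Z) (m.add_mem hX hZ)
  rw [map_add, hXeig, hZeig, lie_add_add_smul_add_smul_s4] at hGOXZ
  have hYGO := (hm Y).1 hY _ hGOXZ
  have hYHX : B Y ⁅H, X⁆ = 0 := by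
    linear_combination hBsymm Y ⁅H, X⁆ + hBinv H X Y - hXhY H hH
  have hHZ : ⁅H, Z⁆ ∈ m := lie_mem_of_forall_bilin_eq_zero hBinv hm hH hZ
  have hYHZ : B Y ⁅H, Z⁆ = 0 :=
    B.eq_zero_of_eigenvalue_ne (hAsymm Y hY _ hHZ) hYeig
      (by rw [hAequiv H hH Z hZ, hZeig, lie_smul]) hne
  have hYXZ : B Y ⁅X, Z⁆ = 0 := by
    simp only [map_add, map_smul, smul_eq_mul, hYHX, hYHZ, mul_zero, zero_add] at hYGO
    exact (mul_eq_zero.1 hYGO).resolve_left (sub_ne_zero.2 hne)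
  linear_combination hBsymm ⁅X, Y⁆ Z + hBinv X Z Y + hBsymm Y ⁅X, Z⁆ - hYXZ

end Lie

theorem stmt_4_general
    {g : Type*} [LieRing g] [LieAlgebra ℝ g] [FiniteDimensional ℝ g]
    (B : g →ₗ[ℝ] g →ₗ[ℝ] ℝ)
    (hBsymm : ∀ X Y : g, B X Y = B Y X)
    (hBpos : ∀ X : g, X ≠ 0 → 0 < B X X)
    (hBinv : ∀ Z X Y : g, B ⁅Z, X⁆ Y + B X ⁅Z, Y⁆ = 0)
    (h : LieSubalgebra ℝ g)
    (m : Submodule ℝ g) (hm : ∀ X : g, X ∈ m ↔ ∀ H ∈ h, B X H = 0)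
    (A : g →ₗ[ℝ] g)
    (hAm : ∀ X ∈ m, A X ∈ m)
    (hAsymm : ∀ X ∈ m, ∀ Y ∈ m, B (A X) Y = B X (A Y))
    (hAequiv : ∀ H ∈ h, ∀ X ∈ m, A ⁅H, X⁆ = ⁅H, A X⁆)
    (hGO : ∀ X ∈ m, ∃ H ∈ h, ⁅H + X, A X⁆ ∈ h)
    (lam : ℝ)
    (X Y : g) (hX : X ∈ m) (hY : Y ∈ m)
    (hXeig : A X = lam • X) (hYeig : A Y = lam • Y)
    (hXhY : ∀ H ∈ h, B X ⁅H, Y⁆ = 0) :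
    (∀ Z ∈ m, ∀ mu : ℝ, mu ≠ lam → A Z = mu • Z → B ⁅X, Y⁆ Z = 0) ∧
      ⁅X, Y⁆ ∈ h.toSubmodule ⊔
        (m ⊓ LinearMap.ker (A - lam • (LinearMap.id : g →ₗ[ℝ] g))) := by
  have horth : ∀ Z ∈ m, ∀ mu : ℝ, mu ≠ lam → A Z = mu • Z → B ⁅X, Y⁆ Z = 0 :=
    fun Z hZ _ hne hZeig => bilin_lie_eq_zero_of_eigenvalue_ne hBsymm hBinv hm hAsymm hAequiv
      hGO hX hY hZ hXeig hYeig hZeig hne hXhY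
  exact ⟨horth, LinearMap.BilinForm.mem_sup_inf_ker_of_forall_eigenvector B hBsymm hBpos
    h.toSubmodule m hm hAm hAsymm horth⟩

/-- In a GO-space, if `X, Y` lie in the `λ`-eigenspace of `A` and `X ⊥ [h, Y]`, then `[X,Y]` is orthogonal to every eigenvector of `A` with eigenvalue `≠ λ`; consequently `[X,Y] ∈ h + ker(A − λ·id)`. -/
theorem stmt_4
    {g : Type*} [LieRing g] [LieAlgebra ℝ g] [FiniteDimensional ℝ g]
    (B : g →ₗ[ℝ] g →ₗ[ℝ] ℝ)
    (hBsymm : ∀ X Y : g, B X Y = B Y X)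
    (hBpos : ∀ X : g, X ≠ 0 → 0 < B X X)
    (hBinv : ∀ Z X Y : g, B ⁅Z, X⁆ Y + B X ⁅Z, Y⁆ = 0)
    (h : LieSubalgebra ℝ g)
    (m : Submodule ℝ g) (hm : ∀ X : g, X ∈ m ↔ ∀ H ∈ h, B X H = 0)
    (A : g →ₗ[ℝ] g)
    (hAm : ∀ X ∈ m, A X ∈ m)
    (hAsymm : ∀ X ∈ m, ∀ Y ∈ m, B (A X) Y = B X (A Y))
    (hApos : ∀ X ∈ m, X ≠ 0 → 0 < B (A X) X)
    (hAequiv : ∀ H ∈ h, ∀ X ∈ m, A ⁅H, X⁆ = ⁅H, A X⁆)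
    (hGO : ∀ X ∈ m, ∃ H ∈ h, ⁅H + X, A X⁆ ∈ h)
    (lam : ℝ) (hlam : 0 < lam)
    (X Y : g) (hX : X ∈ m) (hY : Y ∈ m)
    (hXeig : A X = lam • X) (hYeig : A Y = lam • Y)
    (hXhY : ∀ H ∈ h, B X ⁅H, Y⁆ = 0) :
    (∀ Z ∈ m, ∀ mu : ℝ, mu ≠ lam → A Z = mu • Z → B ⁅X, Y⁆ Z = 0) ∧
      ⁅X, Y⁆ ∈ h.toSubmodule ⊔
        (m ⊓ LinearMap.ker (A - lam • (LinearMap.id : g →ₗ[ℝ] g))) :=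
  stmt_4_general B hBsymm hBpos hBinv h m hm A hAm hAsymm hAequiv hGO lam X Y hX hY hXeig hYeig hXhY
end

section
/- Assume the GO condition holds. Let p, p' ⊆ ker(A − λ·id) be subspaces with [h, p] ⊆ p, [h, p'] ⊆ p' and ⟨p, p'⟩ = 0. Then [X, Y] ∈ h + ker(A − λ·id) for all X ∈ p and Y ∈ p'; equivalently, ⟨[X, Y], Z⟩ = 0 for every eigenvector Z of A with eigenvalue different from λ. -/
/-!
Put `T = A - λ`, `E = m ∩ ker T` and `V = m ∩ E^⊥`. Applying the GO condition to `X + z` with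
`z ∈ V` and pairing with `Y` gives `⟨[X, T z], Y⟩ + ⟨[z, A z], Y⟩ = 0`; the second term is even
in `z`, so `⟨[X, T z], Y⟩ = 0`, i.e. `⟨T z, [X, Y]⟩ = 0`. Since `A` is symmetric, `T` maps `V`
injectively, hence onto itself, so `[X, Y] ⊥ V`. As `(h + E)^⊥ ⊆ V`, this puts `[X, Y]` in
`h + E`, and eigenvectors for eigenvalues `μ ≠ λ` lie in `V`.
-/

open LinearMap (BilinForm ker)

namespace LinearMap.BilinForm

variable {K V : Type*} [Field K] [AddCommGroup V] [Module K V]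

theorem apply_eq_zero_of_eigenvalue_ne {B : BilinForm K V} {m : Submodule K V} {A : V →ₗ[K] V}
    (hA : ∀ x ∈ m, ∀ y ∈ m, B (A x) y = B x (A y)) {x y : V} (hx : x ∈ m) (hy : y ∈ m)
    {μ ν : K} (hxμ : A x = μ • x) (hyν : A y = ν • y) (hne : μ ≠ ν) : B x y = 0 := by
  have h := hA x hx y hy
  rw [hxμ, hyν, map_smul, LinearMap.smul_apply, map_smul, smul_eq_mul, smul_eq_mul] at h
  exact (mul_eq_mul_right_iff.mp h).resolve_left hne

theorem surjOn_inf_orthogonal_inf_ker [FiniteDimensional K V] {B : BilinForm K V}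
    (hB : ∀ x, B x x = 0 → x = 0) {m : Submodule K V} {T : V →ₗ[K] V}
    (hTm : ∀ x ∈ m, T x ∈ m) (hT : ∀ x ∈ m, ∀ y ∈ m, B (T x) y = B x (T y)) :
    Set.SurjOn T (m ⊓ orthogonal B (m ⊓ ker T)) (m ⊓ orthogonal B (m ⊓ ker T)) := by
  have hmaps : ∀ z ∈ m ⊓ orthogonal B (m ⊓ ker T), T z ∈ m ⊓ orthogonal B (m ⊓ ker T) := by
    rintro z ⟨hzm, -⟩
    refine ⟨hTm z hzm, fun e ⟨hem, heT⟩ => ?_⟩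
    rw [← hT e hem z hzm, LinearMap.mem_ker.mp heT, map_zero, LinearMap.zero_apply]
  refine (LinearMap.injOn_iff_surjOn hmaps).mp ((Set.injOn_iff_map_eq_zero _ _).mpr ?_)
  rintro z ⟨hzm, hzE⟩ hTz
  exact hB z (hzE z ⟨hzm, hTz⟩)

end LinearMap.BilinForm

open LinearMap.BilinForm

section GeodesicOrbit

variable {g : Type*} [LieRing g] [LieAlgebra ℝ g] {B : BilinForm ℝ g} {h : LieSubalgebra ℝ g}
  {m p' : Submodule ℝ g} {A : g →ₗ[ℝ] g} {lam : ℝ}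

theorem go_bracket_identity (hBinv : ∀ Z X Y : g, B ⁅Z, X⁆ Y + B X ⁅Z, Y⁆ = 0)
    (hmh : ∀ H ∈ h, ∀ Y ∈ m, B H Y = 0) (hAsymm : ∀ X ∈ m, ∀ Y ∈ m, B (A X) Y = B X (A Y))
    (hGO : ∀ X ∈ m, ∃ H ∈ h, ⁅H + X, A X⁆ ∈ h)
    (hp'm : p' ≤ m) (hp'e : ∀ Y ∈ p', A Y = lam • Y) (hp'h : ∀ H ∈ h, ∀ Y ∈ p', ⁅H, Y⁆ ∈ p')
    {X z Y : g} (hXm : X ∈ m) (hXe : A X = lam • X) (hXp' : ∀ y ∈ p', B X y = 0)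
    (hzm : z ∈ m) (hzp' : ∀ y ∈ p', B z y = 0) (hY : Y ∈ p') :
    B ⁅X, A z - lam • z⁆ Y + B ⁅z, A z⁆ Y = 0 := by
  obtain ⟨H, hH, hbr⟩ := hGO (X + z) (m.add_mem hXm hzm)
  have hHY : ⁅H, Y⁆ ∈ p' := hp'h H hH Y hY
  have hAzHY : B (A z) ⁅H, Y⁆ = 0 := by
    rw [hAsymm z hzm _ (hp'm hHY), hp'e _ hHY, map_smul, hzp' _ hHY, smul_zero]
  have hzX : B ⁅z, X⁆ Y = -B ⁅X, z⁆ Y := by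
    rw [← lie_skew, map_neg, LinearMap.neg_apply]
  have hGOY := hmh _ hbr Y (hp'm hY)
  simp only [map_add, hXe, add_lie, lie_add, lie_smul, lie_self, map_smul, zero_add,
    LinearMap.add_apply, LinearMap.smul_apply, smul_eq_mul] at hGOY
  simp only [lie_sub, lie_smul, map_sub, map_smul, LinearMap.sub_apply, LinearMap.smul_apply,
    smul_eq_mul]
  linear_combination hGOY - lam * hBinv H X Y - hBinv H (A z) Y + hAzHY - lam * hzX
    + lam * hXp' _ hHY

theorem bilin_sub_smul_lie_eq_zero_of_go (hBinv : ∀ Z X Y : g, B ⁅Z, X⁆ Y + B X ⁅Z, Y⁆ = 0)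
    (hmh : ∀ H ∈ h, ∀ Y ∈ m, B H Y = 0) (hAsymm : ∀ X ∈ m, ∀ Y ∈ m, B (A X) Y = B X (A Y))
    (hGO : ∀ X ∈ m, ∃ H ∈ h, ⁅H + X, A X⁆ ∈ h)
    (hp'm : p' ≤ m) (hp'e : ∀ Y ∈ p', A Y = lam • Y) (hp'h : ∀ H ∈ h, ∀ Y ∈ p', ⁅H, Y⁆ ∈ p')
    {X z Y : g} (hXm : X ∈ m) (hXe : A X = lam • X) (hXp' : ∀ y ∈ p', B X y = 0)
    (hzm : z ∈ m) (hzp' : ∀ y ∈ p', B z y = 0) (hY : Y ∈ p') :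
    B (A z - lam • z) ⁅X, Y⁆ = 0 := by
  have hz := go_bracket_identity hBinv hmh hAsymm hGO hp'm hp'e hp'h hXm hXe hXp' hzm hzp' hY
  have hnegz := go_bracket_identity hBinv hmh hAsymm hGO hp'm hp'e hp'h hXm hXe hXp'
    (m.neg_mem hzm) (fun y hy => by rw [map_neg, LinearMap.neg_apply, hzp' y hy, neg_zero]) hY
  rw [map_neg, smul_neg, ← neg_sub', lie_neg, neg_lie, lie_neg, neg_neg, map_neg,
    LinearMap.neg_apply] at hnegz
  linear_combination hBinv X (A z - lam • z) Y - (hz - hnegz) / 2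

end GeodesicOrbit

theorem stmt_6_general
    {g : Type*} [LieRing g] [LieAlgebra ℝ g] [FiniteDimensional ℝ g]
    (B : g →ₗ[ℝ] g →ₗ[ℝ] ℝ)
    (hBsymm : ∀ X Y : g, B X Y = B Y X)
    (hBpos : ∀ X : g, X ≠ 0 → 0 < B X X)
    (hBinv : ∀ Z X Y : g, B ⁅Z, X⁆ Y + B X ⁅Z, Y⁆ = 0)
    (h : LieSubalgebra ℝ g)
    (m : Submodule ℝ g) (hm : ∀ X : g, X ∈ m ↔ ∀ H ∈ h, B X H = 0)
    (A : g →ₗ[ℝ] g)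
    (hAm : ∀ X ∈ m, A X ∈ m)
    (hAsymm : ∀ X ∈ m, ∀ Y ∈ m, B (A X) Y = B X (A Y))
    (hGO : ∀ X ∈ m, ∃ H ∈ h, ⁅H + X, A X⁆ ∈ h)
    (lam : ℝ)
    (p p' : Submodule ℝ g) (hpm : p ≤ m) (hp'm : p' ≤ m)
    (hpe : ∀ X ∈ p, A X = lam • X) (hp'e : ∀ Y ∈ p', A Y = lam • Y)
    (hp'h : ∀ H ∈ h, ∀ Y ∈ p', ⁅H, Y⁆ ∈ p')
    (horth : ∀ X ∈ p, ∀ Y ∈ p', B X Y = 0) :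
    ∀ X ∈ p, ∀ Y ∈ p',
      ⁅X, Y⁆ ∈ h.toSubmodule ⊔
          (m ⊓ LinearMap.ker (A - lam • (LinearMap.id : g →ₗ[ℝ] g))) ∧
        ∀ Z ∈ m, ∀ mu : ℝ, mu ≠ lam → A Z = mu • Z → B ⁅X, Y⁆ Z = 0 := by
  intro X hX Y hY
  set T := A - lam • (LinearMap.id : g →ₗ[ℝ] g)
  have hanis : ∀ x, B x x = 0 → x = 0 := fun x hx => by_contra fun hne => (hBpos x hne).ne' hx
  have hmh : ∀ H ∈ h, ∀ Y ∈ m, B H Y = 0 := fun H hH Y hY => hBsymm H Y ▸ (hm Y).mp hY H hH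
  have hTm : ∀ x ∈ m, T x ∈ m := fun x hx => m.sub_mem (hAm x hx) (m.smul_mem lam hx)
  have hTsymm : ∀ x ∈ m, ∀ y ∈ m, B (T x) y = B x (T y) := fun x hx y hy => by
    simp [T, hAsymm x hx y hy]
  have hbracket : ∀ v ∈ m ⊓ orthogonal B (m ⊓ ker T), B v ⁅X, Y⁆ = 0 := by
    intro v hv
    obtain ⟨z, ⟨hzm, hzE⟩, rfl⟩ := surjOn_inf_orthogonal_inf_ker hanis hTm hTsymm hv
    refine bilin_sub_smul_lie_eq_zero_of_go hBinv hmh hAsymm hGO hp'm hp'e hp'h (hpm hX)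
      (hpe X hX) (horth X hX) hzm (fun y hy => ?_) hY
    exact hBsymm z y ▸ hzE y ⟨hp'm hy, by simp [T, hp'e y hy]⟩
  refine ⟨?_, fun Z hZm mu hmu hAZ => hBsymm _ Z ▸ hbracket Z ⟨hZm, fun e ⟨hem, heT⟩ => ?_⟩⟩
  · have hnd : B.Nondegenerate := ⟨fun x hx => hanis x (hx x), fun y hy => hanis y (hy y)⟩
    rw [← orthogonal_orthogonal hnd (fun x y hxy => hBsymm x y ▸ hxy) (h.toSubmodule ⊔ _)]
    refine fun v hv => hbracket v ⟨(hm v).mpr fun H hH => ?_, fun e he => ?_⟩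
    · exact hBsymm H v ▸ hv H (Submodule.mem_sup_left hH)
    · exact hv e (Submodule.mem_sup_right he)
  · refine apply_eq_zero_of_eigenvalue_ne hAsymm hem hZm ?_ hAZ hmu.symm
    simpa [T, sub_eq_zero] using heT

/-- In a GO-space, brackets of orthogonal `ad h`-invariant subspaces of the same eigenspace of `A` lie in `h + ker(A − λ·id)`; equivalently they are orthogonal to every eigenvector with eigenvalue `≠ λ`. -/
theorem stmt_6
    {g : Type*} [LieRing g] [LieAlgebra ℝ g] [FiniteDimensional ℝ g]
    (B : g →ₗ[ℝ] g →ₗ[ℝ] ℝ)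
    (hBsymm : ∀ X Y : g, B X Y = B Y X)
    (hBpos : ∀ X : g, X ≠ 0 → 0 < B X X)
    (hBinv : ∀ Z X Y : g, B ⁅Z, X⁆ Y + B X ⁅Z, Y⁆ = 0)
    (h : LieSubalgebra ℝ g)
    (m : Submodule ℝ g) (hm : ∀ X : g, X ∈ m ↔ ∀ H ∈ h, B X H = 0)
    (A : g →ₗ[ℝ] g)
    (hAm : ∀ X ∈ m, A X ∈ m)
    (hAsymm : ∀ X ∈ m, ∀ Y ∈ m, B (A X) Y = B X (A Y))
    (hApos : ∀ X ∈ m, X ≠ 0 → 0 < B (A X) X)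
    (hAequiv : ∀ H ∈ h, ∀ X ∈ m, A ⁅H, X⁆ = ⁅H, A X⁆)
    (hGO : ∀ X ∈ m, ∃ H ∈ h, ⁅H + X, A X⁆ ∈ h)
    (lam : ℝ)
    (p p' : Submodule ℝ g) (hpm : p ≤ m) (hp'm : p' ≤ m)
    (hpe : ∀ X ∈ p, A X = lam • X) (hp'e : ∀ Y ∈ p', A Y = lam • Y)
    (hph : ∀ H ∈ h, ∀ X ∈ p, ⁅H, X⁆ ∈ p)
    (hp'h : ∀ H ∈ h, ∀ Y ∈ p', ⁅H, Y⁆ ∈ p')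
    (horth : ∀ X ∈ p, ∀ Y ∈ p', B X Y = 0) :
    ∀ X ∈ p, ∀ Y ∈ p',
      ⁅X, Y⁆ ∈ h.toSubmodule ⊔
          (m ⊓ LinearMap.ker (A - lam • (LinearMap.id : g →ₗ[ℝ] g))) ∧
        ∀ Z ∈ m, ∀ mu : ℝ, mu ≠ lam → A Z = mu • Z → B ⁅X, Y⁆ Z = 0 :=
  stmt_6_general B hBsymm hBpos hBinv h m hm A hAm hAsymm hGO lam p p' hpm hp'm hpe hp'e hp'h horth
end

section
/- (No GO condition assumed.) Let p ⊆ m be a subspace with [p, p] ⊆ h + p and A(p) = p. Then for every X ∈ p and every Z ∈ m with ⟨Z, p⟩ = 0 one has ⟨[Z, X], A X⟩ = 0. (That is, the symmetric connection term U(X, X) lies in p, so such a subspace p is totally geodesic.) -/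
theorem apply_lie_eq_apply_lie_of_invariant {R L : Type*} [CommRing R] [LieRing L] [Module R L]
    (B : L →ₗ[R] L →ₗ[R] R) (hB : ∀ Z X Y : L, B ⁅Z, X⁆ Y + B X ⁅Z, Y⁆ = 0) (Z X Y : L) :
    B ⁅Z, X⁆ Y = B Z ⁅X, Y⁆ := by
  rw [← lie_skew, map_neg, LinearMap.neg_apply, neg_eq_iff_eq_neg, eq_neg_iff_add_eq_zero]
  exact hB X Z Y

theorem stmt_7_general
    {g : Type*} [LieRing g] [LieAlgebra ℝ g]
    (B : g →ₗ[ℝ] g →ₗ[ℝ] ℝ)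
    (hBinv : ∀ Z X Y : g, B ⁅Z, X⁆ Y + B X ⁅Z, Y⁆ = 0)
    (h : LieSubalgebra ℝ g)
    (m : Submodule ℝ g) (hm : ∀ X : g, X ∈ m ↔ ∀ H ∈ h, B X H = 0)
    (A : g →ₗ[ℝ] g)
    (p : Submodule ℝ g)
    (hbr : ∀ X ∈ p, ∀ Y ∈ p, ⁅X, Y⁆ ∈ h.toSubmodule ⊔ p)
    (hAp : Submodule.map A p = p) :
    ∀ X ∈ p, ∀ Z ∈ m, (∀ W ∈ p, B Z W = 0) → B ⁅Z, X⁆ (A X) = 0 := by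
  intro X hX Z hZ hZp
  have hAX : A X ∈ p := hAp ▸ Submodule.mem_map_of_mem hX
  have hperp : h.toSubmodule ⊔ p ≤ LinearMap.ker (B Z) := sup_le ((hm Z).mp hZ) hZp
  rw [apply_lie_eq_apply_lie_of_invariant B hBinv]
  exact hperp (hbr X hX (A X) hAX)

/-- (No GO condition assumed.) If `p ⊆ m` satisfies `[p,p] ⊆ h + p` and `A(p) = p`, then `⟨[Z,X], A X⟩ = 0` for `X ∈ p` and `Z ∈ m` orthogonal to `p`; i.e. `U(X,X) ∈ p` and `p` is totally geodesic. -/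
theorem stmt_7
    {g : Type*} [LieRing g] [LieAlgebra ℝ g] [FiniteDimensional ℝ g]
    (B : g →ₗ[ℝ] g →ₗ[ℝ] ℝ)
    (hBsymm : ∀ X Y : g, B X Y = B Y X)
    (hBpos : ∀ X : g, X ≠ 0 → 0 < B X X)
    (hBinv : ∀ Z X Y : g, B ⁅Z, X⁆ Y + B X ⁅Z, Y⁆ = 0)
    (h : LieSubalgebra ℝ g)
    (m : Submodule ℝ g) (hm : ∀ X : g, X ∈ m ↔ ∀ H ∈ h, B X H = 0)
    (A : g →ₗ[ℝ] g)
    (hAm : ∀ X ∈ m, A X ∈ m)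
    (hAsymm : ∀ X ∈ m, ∀ Y ∈ m, B (A X) Y = B X (A Y))
    (hApos : ∀ X ∈ m, X ≠ 0 → 0 < B (A X) X)
    (hAequiv : ∀ H ∈ h, ∀ X ∈ m, A ⁅H, X⁆ = ⁅H, A X⁆)
    (p : Submodule ℝ g) (hpm : p ≤ m)
    (hbr : ∀ X ∈ p, ∀ Y ∈ p, ⁅X, Y⁆ ∈ h.toSubmodule ⊔ p)
    (hAp : Submodule.map A p = p) :
    ∀ X ∈ p, ∀ Z ∈ m, (∀ W ∈ p, B Z W = 0) → B ⁅Z, X⁆ (A X) = 0 :=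
  stmt_7_general B hBinv h m hm A p hbr hAp
end

section
/- Assume the GO condition holds. Let p ⊆ m be a subspace such that k := h ⊕ p is a Lie subalgebra of g and A(p) = p, and set p⊥ := {X ∈ m : ⟨X, p⟩ = 0}. Then [k, p⊥] ⊆ p⊥, and for every Z ∈ k and all X, Y ∈ p⊥ one has ⟨[Z, X], A Y⟩ + ⟨X, A [Z, Y]⟩ = 0; that is, the restriction of the metric ⟨A·,·⟩ to p⊥ is ad_k-invariant (the algebraic content of the Riemannian submersion G/H → G/K with totally geodesic fibres). -/
/-!
Every `X ∈ p⊥` is orthogonal to all of `k = h ⊕ p`, so ad-invariance of `⟨·,·⟩` and `[k, k] ⊆ k`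
give `[k, p⊥] ⊥ k`, i.e. `[k, p⊥] ⊆ p⊥`. For the invariance of `⟨A·,·⟩`, write `Z = H + P` with
`H ∈ h`, `P ∈ p`. The `h`-part is the `h`-equivariance of `A`. For the `p`-part it suffices, by
polarization, that `⟨[P, X], A X⟩ = 0`. Take the geodesic vector `H + X` of the GO condition:
`[H + X, A X] ∈ h ⊥ P` gives `⟨[H + X, P], A X⟩ = 0`, and `⟨[H, P], A X⟩ = 0` because
`[H, P] ∈ k` while `A X ∈ p⊥` (as `A` preserves `p`).
-/

theorem forall_mem_sup_apply_eq_zero {R M N : Type*} [CommRing R] [AddCommGroup M] [Module R M]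
    [AddCommGroup N] [Module R N] {B : M →ₗ[R] N →ₗ[R] R} {U V : Submodule R N} {X : M}
    (hU : ∀ u ∈ U, B X u = 0) (hV : ∀ v ∈ V, B X v = 0) : ∀ w ∈ U ⊔ V, B X w = 0 := by
  intro w hw
  obtain ⟨u, hu, v, hv, rfl⟩ := Submodule.mem_sup.mp hw
  rw [map_add, hU u hu, hV v hv, add_zero]

theorem apply_add_apply_swap_eq_zero {R M : Type*} [CommRing R] [AddCommGroup M] [Module R M]
    {Q : M →ₗ[R] M →ₗ[R] R} {S : Submodule R M} (hQ : ∀ x ∈ S, Q x x = 0) {x y : M}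
    (hx : x ∈ S) (hy : y ∈ S) : Q x y + Q y x = 0 := by
  have hxy := hQ (x + y) (S.add_mem hx hy)
  simp only [map_add, LinearMap.add_apply, hQ x hx, hQ y hy] at hxy
  linear_combination hxy

theorem forall_mem_apply_map_apply_eq_zero {R M : Type*} [CommRing R] [AddCommGroup M]
    [Module R M] {B : M →ₗ[R] M →ₗ[R] R} {A : M →ₗ[R] M} {m p : Submodule R M}
    (hAsymm : ∀ X ∈ m, ∀ Y ∈ m, B (A X) Y = B X (A Y)) (hpm : p ≤ m) (hAp : p.map A ≤ p)
    {X : M} (hX : X ∈ m) (hXp : ∀ W ∈ p, B X W = 0) : ∀ W ∈ p, B (A X) W = 0 := by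
  intro W hW
  rw [hAsymm X hX W (hpm hW)]
  exact hXp _ (hAp (Submodule.mem_map_of_mem hW))

section InvariantForm

variable {R L : Type*} [CommRing R] [LieRing L] [LieAlgebra R L] {B : L →ₗ[R] L →ₗ[R] R}

theorem apply_lie_eq_neg_apply_lie (hBinv : ∀ Z X Y : L, B ⁅Z, X⁆ Y + B X ⁅Z, Y⁆ = 0)
    (Z X Y : L) : B ⁅Z, X⁆ Y = -B X ⁅Z, Y⁆ :=
  eq_neg_of_add_eq_zero_left (hBinv Z X Y)

theorem forall_mem_apply_lie_eq_zero (hBinv : ∀ Z X Y : L, B ⁅Z, X⁆ Y + B X ⁅Z, Y⁆ = 0)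
    {K : LieSubalgebra R L} {Z X : L} (hZ : Z ∈ K) (hX : ∀ ξ ∈ K, B X ξ = 0) :
    ∀ ξ ∈ K, B ⁅Z, X⁆ ξ = 0 := fun ξ hξ => by
  rw [apply_lie_eq_neg_apply_lie hBinv, hX _ (K.lie_mem hZ hξ), neg_zero]

/-- The core of the GO argument, with `H + X` the geodesic vector and `Y = A X`. -/
theorem apply_lie_eq_zero_of_apply_lie_add_eq_zero (hBsymm : ∀ X Y : L, B X Y = B Y X)
    (hBinv : ∀ Z X Y : L, B ⁅Z, X⁆ Y + B X ⁅Z, Y⁆ = 0) {K : LieSubalgebra R L} {H P X Y : L}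
    (hH : H ∈ K) (hP : P ∈ K) (hHX : B P ⁅H + X, Y⁆ = 0) (hY : ∀ ξ ∈ K, B Y ξ = 0) :
    B ⁅P, X⁆ Y = 0 := by
  have hHXP : B ⁅H + X, P⁆ Y = 0 := by
    rw [apply_lie_eq_neg_apply_lie hBinv, hHX, neg_zero]
  have hHP : B ⁅H, P⁆ Y = 0 := by
    rw [hBsymm]
    exact hY _ (K.lie_mem hH hP)
  rw [add_lie, map_add, LinearMap.add_apply, hHP, zero_add] at hHXP
  rw [← lie_skew, map_neg, LinearMap.neg_apply, hHXP, neg_zero]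

end InvariantForm

theorem stmt_8_general
    {g : Type*} [LieRing g] [LieAlgebra ℝ g]
    (B : g →ₗ[ℝ] g →ₗ[ℝ] ℝ)
    (hBsymm : ∀ X Y : g, B X Y = B Y X)
    (hBinv : ∀ Z X Y : g, B ⁅Z, X⁆ Y + B X ⁅Z, Y⁆ = 0)
    (h : LieSubalgebra ℝ g)
    (m : Submodule ℝ g) (hm : ∀ X : g, X ∈ m ↔ ∀ H ∈ h, B X H = 0)
    (A : g →ₗ[ℝ] g)
    (hAm : ∀ X ∈ m, A X ∈ m)
    (hAsymm : ∀ X ∈ m, ∀ Y ∈ m, B (A X) Y = B X (A Y))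
    (hAequiv : ∀ H ∈ h, ∀ X ∈ m, A ⁅H, X⁆ = ⁅H, A X⁆)
    (hGO : ∀ X ∈ m, ∃ H ∈ h, ⁅H + X, A X⁆ ∈ h)
    (p : Submodule ℝ g) (hpm : p ≤ m)
    (hk : ∀ X ∈ h.toSubmodule ⊔ p, ∀ Y ∈ h.toSubmodule ⊔ p,
      ⁅X, Y⁆ ∈ h.toSubmodule ⊔ p)
    (hAp : Submodule.map A p = p) :
    (∀ Z ∈ h.toSubmodule ⊔ p, ∀ X ∈ m, (∀ W ∈ p, B X W = 0) →
        ⁅Z, X⁆ ∈ m ∧ ∀ W ∈ p, B ⁅Z, X⁆ W = 0) ∧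
      ∀ Z ∈ h.toSubmodule ⊔ p, ∀ X ∈ m, ∀ Y ∈ m,
        (∀ W ∈ p, B X W = 0) → (∀ W ∈ p, B Y W = 0) →
        B ⁅Z, X⁆ (A Y) + B X (A ⁅Z, Y⁆) = 0 := by
  let k : LieSubalgebra ℝ g :=
    { h.toSubmodule ⊔ p with lie_mem' := fun hX hY => hk _ hX _ hY }
  have hhk : ∀ H ∈ h, H ∈ k := fun _ hH => Submodule.mem_sup_left hH
  have hpk : ∀ P ∈ p, P ∈ k := fun _ hP => Submodule.mem_sup_right hP
  have orthogonal_k : ∀ X ∈ m, (∀ W ∈ p, B X W = 0) → ∀ ξ ∈ k, B X ξ = 0 :=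
    fun X hX hXp => forall_mem_sup_apply_eq_zero ((hm X).mp hX) hXp
  have lie_mem_perp : ∀ Z ∈ k, ∀ X ∈ m, (∀ W ∈ p, B X W = 0) →
      ⁅Z, X⁆ ∈ m ∧ ∀ W ∈ p, B ⁅Z, X⁆ W = 0 := fun Z hZ X hX hXp =>
    have hZX := forall_mem_apply_lie_eq_zero hBinv hZ (orthogonal_k X hX hXp)
    ⟨(hm _).mpr fun H hH => hZX H (hhk H hH), fun W hW => hZX W (hpk W hW)⟩
  refine ⟨lie_mem_perp, ?_⟩
  intro Z hZ X hX Y hY hXp hYp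
  obtain ⟨H, hH, P, hP, rfl⟩ := Submodule.mem_sup.mp hZ
  have h_part : B ⁅H, X⁆ (A Y) + B X (A ⁅H, Y⁆) = 0 := by
    rw [hAequiv H hH Y hY]
    exact hBinv H X (A Y)
  have p_part : B ⁅P, X⁆ (A Y) + B X (A ⁅P, Y⁆) = 0 := by
    let perp : Submodule ℝ g := m ⊓ p.orthogonalBilin B.flip
    have geodesic : ∀ V ∈ perp, B ⁅P, V⁆ (A V) = 0 := fun V ⟨hV, hVp⟩ => by
      obtain ⟨H', hH', hGOV⟩ := hGO V hV
      exact apply_lie_eq_zero_of_apply_lie_add_eq_zero hBsymm hBinv (hhk H' hH') (hpk P hP)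
        ((hm P).mp (hpm hP) _ hGOV) (orthogonal_k _ (hAm V hV)
          (forall_mem_apply_map_apply_eq_zero hAsymm hpm hAp.le hV hVp))
    have polar := apply_add_apply_swap_eq_zero (Q := B.compl₁₂ (LieAlgebra.ad ℝ g P) A)
      (S := perp) geodesic ⟨hX, hXp⟩ ⟨hY, hYp⟩
    rw [hBsymm X, hAsymm _ (lie_mem_perp P (hpk P hP) Y hY hYp).1 X hX]
    simpa using polar
  rw [add_lie, add_lie, map_add, LinearMap.add_apply, map_add, map_add]
  linear_combination h_part + p_part

/-- In a GO-space, if `k = h ⊕ p` is a subalgebra with `A(p) = p`, then `[k, p⊥] ⊆ p⊥` and the metric `⟨A·,·⟩` restricted to `p⊥ = {X ∈ m : X ⊥ p}` is `ad k`-invariant (the Riemannian submersion `G/H → G/K`). -/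
theorem stmt_8
    {g : Type*} [LieRing g] [LieAlgebra ℝ g] [FiniteDimensional ℝ g]
    (B : g →ₗ[ℝ] g →ₗ[ℝ] ℝ)
    (hBsymm : ∀ X Y : g, B X Y = B Y X)
    (hBpos : ∀ X : g, X ≠ 0 → 0 < B X X)
    (hBinv : ∀ Z X Y : g, B ⁅Z, X⁆ Y + B X ⁅Z, Y⁆ = 0)
    (h : LieSubalgebra ℝ g)
    (m : Submodule ℝ g) (hm : ∀ X : g, X ∈ m ↔ ∀ H ∈ h, B X H = 0)
    (A : g →ₗ[ℝ] g)
    (hAm : ∀ X ∈ m, A X ∈ m)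
    (hAsymm : ∀ X ∈ m, ∀ Y ∈ m, B (A X) Y = B X (A Y))
    (hApos : ∀ X ∈ m, X ≠ 0 → 0 < B (A X) X)
    (hAequiv : ∀ H ∈ h, ∀ X ∈ m, A ⁅H, X⁆ = ⁅H, A X⁆)
    (hGO : ∀ X ∈ m, ∃ H ∈ h, ⁅H + X, A X⁆ ∈ h)
    (p : Submodule ℝ g) (hpm : p ≤ m)
    (hk : ∀ X ∈ h.toSubmodule ⊔ p, ∀ Y ∈ h.toSubmodule ⊔ p,
      ⁅X, Y⁆ ∈ h.toSubmodule ⊔ p)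
    (hAp : Submodule.map A p = p) :
    (∀ Z ∈ h.toSubmodule ⊔ p, ∀ X ∈ m, (∀ W ∈ p, B X W = 0) →
        ⁅Z, X⁆ ∈ m ∧ ∀ W ∈ p, B ⁅Z, X⁆ W = 0) ∧
      ∀ Z ∈ h.toSubmodule ⊔ p, ∀ X ∈ m, ∀ Y ∈ m,
        (∀ W ∈ p, B X W = 0) → (∀ W ∈ p, B Y W = 0) →
        B ⁅Z, X⁆ (A Y) + B X (A ⁅Z, Y⁆) = 0 :=
  stmt_8_general B hBsymm hBinv h m hm A hAm hAsymm hAequiv hGO p hpm hk hAp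
end

section
/- Suppose m = m_1 ⊕ ⋯ ⊕ m_k is a decomposition into pairwise ⟨·,·⟩-orthogonal subspaces with [h, m_i] ⊆ m_i for each i, such that [m_i, m_j] = 0 for all i < j with (i, j) ≠ (1, 2), [m_1, m_2] ⊆ m_2, and such that for all X ∈ m_1 and Y ∈ m_2 there exists H ∈ h with [H, Y] = [X, Y] and [H, m_i] = 0 for every i ≠ 2. Then for all positive real numbers x_1, …, x_k the endomorphism A = x_1·id_{m_1} + ⋯ + x_k·id_{m_k} is symmetric, positive definite, h-equivariant, and the datum (g, ⟨·,·⟩, h, A) satisfies the GO condition (so every such metric is a metric with homogeneous geodesics). -/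
/-
Write X = ∑ Xᵢ along the orthogonal summands, so that A X = ∑ xᵢ Xᵢ. Orthogonality gives
⟨A X, Y⟩ = ∑ xᵢ ⟨Xᵢ, Yᵢ⟩ = ⟨X, A Y⟩, whence symmetry and positivity, and equivariance holds
summand by summand. For the GO condition, the only brackets that survive are those between
m₁ and m₂, so [X, A X] = (x₂ - x₁) [X₁, X₂]. An H ∈ h with [H, X₂] = [X₁, X₂] that kills the
other summands has [H, A X] = x₂ [X₁, X₂], so H' = ((x₁ - x₂) / x₂) H gives [H' + X, A X] = 0.
-/

open Finset

section Decomposition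

variable {ι R E : Type*} [CommRing R] [AddCommGroup E] [Module R E]
  {s : Finset ι} {M : ι → Submodule R E} {A : E →ₗ[R] E} {x : ι → R}

theorem Submodule.exists_sum_eq_of_mem_biSup {X : E} (hX : X ∈ ⨆ i ∈ s, M i) :
    ∃ f : ι → E, (∀ i, f i ∈ M i) ∧ ∑ i ∈ s, f i = X := by
  obtain ⟨μ, hμ⟩ := (Submodule.mem_iSup_finset_iff_exists_sum M X).1 hX
  exact ⟨fun i => μ i, fun i => (μ i).2, hμ⟩

theorem LinearMap.map_sum_of_eq_smul_on (hA : ∀ i ∈ s, ∀ X ∈ M i, A X = x i • X)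
    {f : ι → E} (hf : ∀ i ∈ s, f i ∈ M i) :
    A (∑ i ∈ s, f i) = ∑ i ∈ s, x i • f i := by
  rw [map_sum]
  exact sum_congr rfl fun i hi => hA i hi _ (hf i hi)

variable {B : E →ₗ[R] E →ₗ[R] R}

theorem LinearMap.apply_sum_sum_of_orthogonal
    (horth : ∀ i ∈ s, ∀ j ∈ s, i ≠ j → ∀ X ∈ M i, ∀ Y ∈ M j, B X Y = 0)
    {f p : ι → E} (hf : ∀ i ∈ s, f i ∈ M i) (hp : ∀ i ∈ s, p i ∈ M i) :
    B (∑ i ∈ s, f i) (∑ j ∈ s, p j) = ∑ i ∈ s, B (f i) (p i) := by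
  simp only [map_sum, LinearMap.sum_apply]
  exact sum_congr rfl fun i hi => sum_eq_single_of_mem i hi fun j hj hji =>
    horth j hj i hi hji _ (hf j hj) _ (hp i hi)

theorem LinearMap.apply_map_sum_sum_of_orthogonal
    (horth : ∀ i ∈ s, ∀ j ∈ s, i ≠ j → ∀ X ∈ M i, ∀ Y ∈ M j, B X Y = 0)
    (hA : ∀ i ∈ s, ∀ X ∈ M i, A X = x i • X)
    {f p : ι → E} (hf : ∀ i ∈ s, f i ∈ M i) (hp : ∀ i ∈ s, p i ∈ M i) :
    B (A (∑ i ∈ s, f i)) (∑ j ∈ s, p j) = ∑ i ∈ s, x i * B (f i) (p i) := by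
  rw [LinearMap.map_sum_of_eq_smul_on hA hf,
    LinearMap.apply_sum_sum_of_orthogonal horth (fun i hi => (M i).smul_mem _ (hf i hi)) hp]
  simp only [map_smul, LinearMap.smul_apply, smul_eq_mul]

theorem LinearMap.apply_sum_map_sum_of_orthogonal
    (horth : ∀ i ∈ s, ∀ j ∈ s, i ≠ j → ∀ X ∈ M i, ∀ Y ∈ M j, B X Y = 0)
    (hA : ∀ i ∈ s, ∀ X ∈ M i, A X = x i • X)
    {f p : ι → E} (hf : ∀ i ∈ s, f i ∈ M i) (hp : ∀ i ∈ s, p i ∈ M i) :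
    B (∑ i ∈ s, f i) (A (∑ j ∈ s, p j)) = ∑ i ∈ s, x i * B (f i) (p i) := by
  rw [LinearMap.map_sum_of_eq_smul_on hA hp,
    LinearMap.apply_sum_sum_of_orthogonal horth hf (fun i hi => (M i).smul_mem _ (hp i hi))]
  simp only [map_smul, smul_eq_mul]

theorem LinearMap.apply_map_eq_apply_map_of_orthogonal
    (horth : ∀ i ∈ s, ∀ j ∈ s, i ≠ j → ∀ X ∈ M i, ∀ Y ∈ M j, B X Y = 0)
    (hA : ∀ i ∈ s, ∀ X ∈ M i, A X = x i • X)
    {X Y : E} (hX : X ∈ ⨆ i ∈ s, M i) (hY : Y ∈ ⨆ i ∈ s, M i) :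
    B (A X) Y = B X (A Y) := by
  obtain ⟨f, hf, rfl⟩ := Submodule.exists_sum_eq_of_mem_biSup hX
  obtain ⟨p, hp, rfl⟩ := Submodule.exists_sum_eq_of_mem_biSup hY
  rw [LinearMap.apply_map_sum_sum_of_orthogonal horth hA (fun i _ => hf i) (fun i _ => hp i),
    LinearMap.apply_sum_map_sum_of_orthogonal horth hA (fun i _ => hf i) (fun i _ => hp i)]

theorem LinearMap.apply_map_pos_of_orthogonal [LinearOrder R] [IsStrictOrderedRing R]
    (hB : ∀ X : E, X ≠ 0 → 0 < B X X)
    (horth : ∀ i ∈ s, ∀ j ∈ s, i ≠ j → ∀ X ∈ M i, ∀ Y ∈ M j, B X Y = 0)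
    (hA : ∀ i ∈ s, ∀ X ∈ M i, A X = x i • X) (hx : ∀ i ∈ s, 0 < x i)
    {X : E} (hX : X ∈ ⨆ i ∈ s, M i) (hX₀ : X ≠ 0) :
    0 < B (A X) X := by
  obtain ⟨f, hf, rfl⟩ := Submodule.exists_sum_eq_of_mem_biSup hX
  rw [LinearMap.apply_map_sum_sum_of_orthogonal horth hA (fun i _ => hf i) (fun i _ => hf i)]
  obtain ⟨i₀, hi₀, hf₀⟩ : ∃ i ∈ s, f i ≠ 0 := by
    by_contra! h
    exact hX₀ (sum_eq_zero h)
  have hterm : ∀ i ∈ s, 0 ≤ x i * B (f i) (f i) := fun i hi => by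
    rcases eq_or_ne (f i) 0 with h | h
    · simp [h]
    · exact (mul_pos (hx i hi) (hB _ h)).le
  exact sum_pos' hterm ⟨i₀, hi₀, mul_pos (hx i₀ hi₀) (hB _ hf₀)⟩

end Decomposition

section LieAlgebra

variable {ι R L : Type*} [CommRing R] [LieRing L] [LieAlgebra R L]
  {s : Finset ι} {M : ι → Submodule R L} {A : L →ₗ[R] L} {x : ι → R}

theorem LinearMap.map_lie_of_eq_smul_on (hA : ∀ i ∈ s, ∀ X ∈ M i, A X = x i • X)
    {H : L} (hH : ∀ i ∈ s, ∀ X ∈ M i, ⁅H, X⁆ ∈ M i) {X : L} (hX : X ∈ ⨆ i ∈ s, M i) :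
    A ⁅H, X⁆ = ⁅H, A X⁆ := by
  obtain ⟨f, hf, rfl⟩ := Submodule.exists_sum_eq_of_mem_biSup hX
  rw [lie_sum, LinearMap.map_sum_of_eq_smul_on hA fun i hi => hH i hi _ (hf i),
    LinearMap.map_sum_of_eq_smul_on hA fun i _ => hf i, lie_sum]
  simp only [lie_smul]

theorem lie_sum_sum_smul_of_lie_eq_zero [LinearOrder ι] {a b : ι} (ha : a ∈ s) (hb : b ∈ s)
    (hab : a < b) (f : ι → L) (c : ι → R)
    (hf : ∀ i ∈ s, ∀ j ∈ s, i < j → ¬(i = a ∧ j = b) → ⁅f i, f j⁆ = 0) :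
    ⁅∑ i ∈ s, f i, ∑ j ∈ s, c j • f j⁆ = (c b - c a) • ⁅f a, f b⁆ := by
  have hf' : ∀ p ∈ s ×ˢ s, p ≠ (a, b) ∧ p ≠ (b, a) → ⁅f p.1, c p.2 • f p.2⁆ = 0 := by
    rintro ⟨i, j⟩ hij ⟨hne, hne'⟩
    obtain ⟨hi, hj⟩ := mem_product.1 hij
    rw [lie_smul]
    rcases lt_trichotomy i j with hlt | rfl | hgt
    · rw [hf i hi j hj hlt fun h => hne (Prod.ext h.1 h.2), smul_zero]
    · rw [lie_self, smul_zero]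
    · rw [← lie_skew, hf j hj i hi hgt fun h => hne' (Prod.ext h.2 h.1), neg_zero, smul_zero]
  rw [sum_lie_sum, ← sum_product', sum_eq_add_of_mem (a, b) (b, a) (mk_mem_product ha hb)
    (mk_mem_product hb ha) (by simp [hab.ne]) hf']
  dsimp only
  rw [lie_smul, lie_smul, ← lie_skew (f a)]
  module
theorem lie_smul_add_sum_map_sum_eq_zero {K : Type*} [Field K] [LieAlgebra K L]
    [LinearOrder ι] {s : Finset ι} {M : ι → Submodule K L} {A : L →ₗ[K] L} {x : ι → K}
    {a b : ι} (ha : a ∈ s) (hb : b ∈ s) (hab : a < b) (hA : ∀ i ∈ s, ∀ X ∈ M i, A X = x i • X)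
    (hcomm : ∀ i ∈ s, ∀ j ∈ s, i < j → ¬(i = a ∧ j = b) → ∀ X ∈ M i, ∀ Y ∈ M j, ⁅X, Y⁆ = 0)
    {f : ι → L} (hf : ∀ i ∈ s, f i ∈ M i) {H : L} (hHb : ⁅H, f b⁆ = ⁅f a, f b⁆)
    (hH : ∀ i ∈ s, i ≠ b → ⁅H, f i⁆ = 0) (hxb : x b ≠ 0) :
    ⁅((x a - x b) / x b) • H + ∑ i ∈ s, f i, A (∑ i ∈ s, f i)⁆ = 0 := by
  have hHA : ⁅H, ∑ i ∈ s, x i • f i⁆ = x b • ⁅f a, f b⁆ := by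
    rw [lie_sum, sum_eq_single_of_mem b hb fun i hi hib => by rw [lie_smul, hH i hi hib, smul_zero],
      lie_smul, hHb]
  rw [LinearMap.map_sum_of_eq_smul_on hA hf, add_lie, smul_lie, hHA,
    lie_sum_sum_smul_of_lie_eq_zero ha hb hab f x
      fun i hi j hj hij hab' => hcomm i hi j hj hij hab' _ (hf i hi) _ (hf j hj),
    smul_smul, div_mul_cancel₀ _ hxb, ← add_smul]
  simp

theorem LieSubalgebra.exists_lie_add_map_mem {K : Type*} [Field K] [LieAlgebra K L]
    [LinearOrder ι] {s : Finset ι} {M : ι → Submodule K L} {A : L →ₗ[K] L} {x : ι → K}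
    (h : LieSubalgebra K L) {a b : ι} (ha : a ∈ s) (hb : b ∈ s) (hab : a < b)
    (hA : ∀ i ∈ s, ∀ X ∈ M i, A X = x i • X)
    (hcomm : ∀ i ∈ s, ∀ j ∈ s, i < j → ¬(i = a ∧ j = b) → ∀ X ∈ M i, ∀ Y ∈ M j, ⁅X, Y⁆ = 0)
    (hH : ∀ X ∈ M a, ∀ Y ∈ M b, ∃ H ∈ h, ⁅H, Y⁆ = ⁅X, Y⁆ ∧
      ∀ i ∈ s, i ≠ b → ∀ W ∈ M i, ⁅H, W⁆ = 0)
    (hxb : x b ≠ 0) {X : L} (hX : X ∈ ⨆ i ∈ s, M i) :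
    ∃ H ∈ h, ⁅H + X, A X⁆ ∈ h := by
  obtain ⟨f, hf, rfl⟩ := Submodule.exists_sum_eq_of_mem_biSup hX
  obtain ⟨H, hHh, hHb, hH⟩ := hH _ (hf a) _ (hf b)
  refine ⟨((x a - x b) / x b) • H, h.smul_mem _ hHh, ?_⟩
  rw [lie_smul_add_sum_map_sum_eq_zero ha hb hab hA hcomm (fun i _ => hf i) hHb
    (fun i hi hib => hH i hi hib _ (hf i)) hxb]
  exact h.zero_mem

end LieAlgebra

theorem stmt_10_general
    {g : Type*} [LieRing g] [LieAlgebra ℝ g]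
    (B : g →ₗ[ℝ] g →ₗ[ℝ] ℝ)
    (hBpos : ∀ X : g, X ≠ 0 → 0 < B X X)
    (h : LieSubalgebra ℝ g)
    (m : Submodule ℝ g)
    (k : ℕ) (hk : 2 ≤ k) (M : ℕ → Submodule ℝ g)
    (hMh : ∀ i < k, ∀ H ∈ h, ∀ X ∈ M i, ⁅H, X⁆ ∈ M i)
    (horth : ∀ i < k, ∀ j < k, i ≠ j → ∀ X ∈ M i, ∀ Y ∈ M j, B X Y = 0)
    (hsup : (⨆ i ∈ Finset.range k, M i) = m)
    (hcomm : ∀ i < k, ∀ j < k, i < j → ¬(i = 0 ∧ j = 1) →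
      ∀ X ∈ M i, ∀ Y ∈ M j, ⁅X, Y⁆ = 0)
    (hH : ∀ X ∈ M 0, ∀ Y ∈ M 1, ∃ H ∈ h, ⁅H, Y⁆ = ⁅X, Y⁆ ∧
      ∀ i < k, i ≠ 1 → ∀ W ∈ M i, ⁅H, W⁆ = 0)
    (x : ℕ → ℝ) (hx : ∀ i < k, 0 < x i)
    (A : g →ₗ[ℝ] g) (hA : ∀ i < k, ∀ X ∈ M i, A X = x i • X) :
    (∀ X ∈ m, ∀ Y ∈ m, B (A X) Y = B X (A Y)) ∧
      (∀ X ∈ m, X ≠ 0 → 0 < B (A X) X) ∧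
      (∀ H ∈ h, ∀ X ∈ m, A ⁅H, X⁆ = ⁅H, A X⁆) ∧
      ∀ X ∈ m, ∃ H ∈ h, ⁅H + X, A X⁆ ∈ h := by
  subst hsup
  simp only [← Finset.mem_range (n := k)] at hMh horth hcomm hH hx hA
  have h0 : 0 ∈ range k := mem_range.2 (by omega)
  have h1 : 1 ∈ range k := mem_range.2 (by omega)
  exact ⟨fun X hX Y hY => LinearMap.apply_map_eq_apply_map_of_orthogonal horth hA hX hY,
    fun X hX hX₀ => LinearMap.apply_map_pos_of_orthogonal hBpos horth hA hx hX hX₀,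
    fun H hH X hX => LinearMap.map_lie_of_eq_smul_on hA (fun i hi => hMh i hi H hH) hX,
    fun X hX => h.exists_lie_add_map_mem h0 h1 zero_lt_one hA hcomm hH (hx 1 h1).ne' hX⟩

/-- A sufficient condition for existence of GO-metrics: for the given bracket relations between the orthogonal `ad h`-invariant summands `m = m₁ ⊕ ⋯ ⊕ m_k`, every diagonal endomorphism `A = Σ xᵢ·id_{mᵢ}` with `xᵢ > 0` is symmetric, positive definite, `h`-equivariant and satisfies the GO condition. -/
theorem stmt_10
    {g : Type*} [LieRing g] [LieAlgebra ℝ g] [FiniteDimensional ℝ g]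
    (B : g →ₗ[ℝ] g →ₗ[ℝ] ℝ)
    (hBsymm : ∀ X Y : g, B X Y = B Y X)
    (hBpos : ∀ X : g, X ≠ 0 → 0 < B X X)
    (hBinv : ∀ Z X Y : g, B ⁅Z, X⁆ Y + B X ⁅Z, Y⁆ = 0)
    (h : LieSubalgebra ℝ g)
    (m : Submodule ℝ g) (hm : ∀ X : g, X ∈ m ↔ ∀ H ∈ h, B X H = 0)
    (k : ℕ) (hk : 2 ≤ k) (M : ℕ → Submodule ℝ g)
    (hMm : ∀ i < k, M i ≤ m)
    (hMh : ∀ i < k, ∀ H ∈ h, ∀ X ∈ M i, ⁅H, X⁆ ∈ M i)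
    (horth : ∀ i < k, ∀ j < k, i ≠ j → ∀ X ∈ M i, ∀ Y ∈ M j, B X Y = 0)
    (hsup : (⨆ i ∈ Finset.range k, M i) = m)
    (hcomm : ∀ i < k, ∀ j < k, i < j → ¬(i = 0 ∧ j = 1) →
      ∀ X ∈ M i, ∀ Y ∈ M j, ⁅X, Y⁆ = 0)
    (h12 : ∀ X ∈ M 0, ∀ Y ∈ M 1, ⁅X, Y⁆ ∈ M 1)
    (hH : ∀ X ∈ M 0, ∀ Y ∈ M 1, ∃ H ∈ h, ⁅H, Y⁆ = ⁅X, Y⁆ ∧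
      ∀ i < k, i ≠ 1 → ∀ W ∈ M i, ⁅H, W⁆ = 0)
    (x : ℕ → ℝ) (hx : ∀ i < k, 0 < x i)
    (A : g →ₗ[ℝ] g) (hA : ∀ i < k, ∀ X ∈ M i, A X = x i • X) :
    (∀ X ∈ m, ∀ Y ∈ m, B (A X) Y = B X (A Y)) ∧
      (∀ X ∈ m, X ≠ 0 → 0 < B (A X) X) ∧
      (∀ H ∈ h, ∀ X ∈ m, A ⁅H, X⁆ = ⁅H, A X⁆) ∧
      ∀ X ∈ m, ∃ H ∈ h, ⁅H + X, A X⁆ ∈ h :=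
  stmt_10_general B hBpos h m k hk M hMh horth hsup hcomm hH x hx A hA
end

section
/- (No GO condition assumed.) Let k = h ⊕ p and k' = h ⊕ p' be Lie subalgebras of g containing h, with p, p' ⊆ m. Set q = p ∩ p', p_1 = {X ∈ p : ⟨X, q⟩ = 0}, p_2 = {X ∈ p' : ⟨X, q⟩ = 0}, assume ⟨p_1, p_2⟩ = 0, and let n = {X ∈ m : ⟨X, v⟩ = 0 for all v ∈ q + p_1 + p_2}. Then [p_1, p_2] ⊆ n. -/
/-!
Write `q = p ⊓ p'`, `p₁ = p ⊓ q^⊥`, `p₂ = p' ⊓ q^⊥`, `k = h ⊕ p` and `k' = h ⊕ p'`.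
Since the form is definite on `q`, `p = q ⊕ p₁`; an element of `p₂` is orthogonal to `q` and
to `p₁`, hence to `p`, and, lying in `m`, to all of `k`. By ad-invariance the orthogonal
complement of the subalgebra `k` is stable under `ad k`, so `[p₁, p₂] ⊥ k`. Symmetrically
`p₁ ⊥ k'` and `[p₂, p₁] ⊥ k'`. As `h ⊆ k` and `q + p₁ + p₂ ⊆ k + k'`, this is the claim.
-/

namespace LinearMap.BilinForm

section Semiring

variable {R M : Type*} [CommSemiring R] [AddCommMonoid M] [Module R M]
  {B : LinearMap.BilinForm R M}

theorem orthogonal_sup (N N' : Submodule R M) :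
    B.orthogonal (N ⊔ N') = B.orthogonal N ⊓ B.orthogonal N' := by
  refine le_antisymm (le_inf (orthogonal_le le_sup_left) (orthogonal_le le_sup_right)) ?_
  rintro y ⟨hyN, hyN'⟩ _ hx
  obtain ⟨a, ha, b, hb, rfl⟩ := Submodule.mem_sup.1 hx
  rw [map_add, LinearMap.add_apply, hyN a ha, hyN' b hb, add_zero]

theorem IsRefl.mem_orthogonal_iff' (hB : B.IsRefl) {N : Submodule R M} {y : M} :
    y ∈ B.orthogonal N ↔ ∀ x ∈ N, B y x = 0 := by
  simp only [mem_orthogonal_iff, hB.eq_iff]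

end Semiring

section Field

variable {K V : Type*} [Field K] [AddCommGroup V] [Module K V] [FiniteDimensional K V]
  {B : LinearMap.BilinForm K V}

theorem isCompl_orthogonal_of_anisotropic (hB : B.IsRefl) (hB₀ : ∀ x, B x x = 0 → x = 0)
    (W : Submodule K V) : IsCompl W (B.orthogonal W) :=
  (isCompl_orthogonal_iff_disjoint hB).2 <|
    Submodule.disjoint_def.2 fun x hxW hxW' ↦ hB₀ x (hxW' x hxW)

theorem sup_orthogonal_inf_eq_of_anisotropic (hB : B.IsRefl) (hB₀ : ∀ x, B x x = 0 → x = 0)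
    {q p : Submodule K V} (hqp : q ≤ p) : q ⊔ B.orthogonal q ⊓ p = p := by
  rw [← sup_inf_assoc_of_le _ hqp, (isCompl_orthogonal_of_anisotropic hB hB₀ q).sup_eq_top,
    top_inf_eq]

theorem mem_orthogonal_of_mem_orthogonal_inf (hB : B.IsRefl) (hB₀ : ∀ x, B x x = 0 → x = 0)
    {q p : Submodule K V} (hqp : q ≤ p) {y : V} (hyq : y ∈ B.orthogonal q)
    (hy : y ∈ B.orthogonal (B.orthogonal q ⊓ p)) : y ∈ B.orthogonal p := by
  rw [← sup_orthogonal_inf_eq_of_anisotropic hB hB₀ hqp, orthogonal_sup]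
  exact ⟨hyq, hy⟩

end Field

theorem lie_mem_orthogonal {R L : Type*} [CommRing R] [LieRing L] [LieAlgebra R L]
    {B : LinearMap.BilinForm R L} (hB : B.lieInvariant L) {k : Submodule R L}
    (hk : ∀ x ∈ k, ∀ y ∈ k, ⁅x, y⁆ ∈ k) {x y : L} (hx : x ∈ k) (hy : y ∈ B.orthogonal k) :
    ⁅x, y⁆ ∈ B.orthogonal k := fun z hz ↦ by
  rw [← neg_eq_zero, ← hB]
  exact hy _ (hk x hx z hz)

end LinearMap.BilinForm

open LinearMap.BilinForm in
theorem stmt_12_general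
    {g : Type*} [LieRing g] [LieAlgebra ℝ g] [FiniteDimensional ℝ g]
    (B : g →ₗ[ℝ] g →ₗ[ℝ] ℝ)
    (hBsymm : ∀ X Y : g, B X Y = B Y X)
    (hBpos : ∀ X : g, X ≠ 0 → 0 < B X X)
    (hBinv : ∀ Z X Y : g, B ⁅Z, X⁆ Y + B X ⁅Z, Y⁆ = 0)
    (h : LieSubalgebra ℝ g)
    (m : Submodule ℝ g) (hm : ∀ X : g, X ∈ m ↔ ∀ H ∈ h, B X H = 0)
    (p p' : Submodule ℝ g) (hpm : p ≤ m) (hp'm : p' ≤ m)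
    (hkp : ∀ X ∈ h.toSubmodule ⊔ p, ∀ Y ∈ h.toSubmodule ⊔ p,
      ⁅X, Y⁆ ∈ h.toSubmodule ⊔ p)
    (hkp' : ∀ X ∈ h.toSubmodule ⊔ p', ∀ Y ∈ h.toSubmodule ⊔ p',
      ⁅X, Y⁆ ∈ h.toSubmodule ⊔ p')
    (horth : ∀ X ∈ p, (∀ W ∈ p ⊓ p', B X W = 0) →
      ∀ Y ∈ p', (∀ W ∈ p ⊓ p', B Y W = 0) → B X Y = 0) :
    ∀ X ∈ p, (∀ W ∈ p ⊓ p', B X W = 0) →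
    ∀ Y ∈ p', (∀ W ∈ p ⊓ p', B Y W = 0) →
      ⁅X, Y⁆ ∈ m ∧
      (∀ W ∈ p ⊓ p', B ⁅X, Y⁆ W = 0) ∧
      (∀ W ∈ p, (∀ V ∈ p ⊓ p', B W V = 0) → B ⁅X, Y⁆ W = 0) ∧
      (∀ W ∈ p', (∀ V ∈ p ⊓ p', B W V = 0) → B ⁅X, Y⁆ W = 0) := by
  intro X hX hXq Y hY hYq
  have hrefl : IsRefl B := (IsSymm.mk hBsymm).isRefl
  have hperp {N : Submodule ℝ g} {Z : g} : Z ∈ orthogonal B N ↔ ∀ W ∈ N, B Z W = 0 :=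
    IsRefl.mem_orthogonal_iff' hrefl
  have haniso (Z : g) (hZ : B Z Z = 0) : Z = 0 := by_contra fun hne ↦ (hBpos Z hne).ne' hZ
  have hinv : lieInvariant g B := fun Z X Y ↦ eq_neg_of_add_eq_zero_left (hBinv Z X Y)
  have hYk : Y ∈ orthogonal B (h.toSubmodule ⊔ p) := by
    refine (orthogonal_sup _ _).ge ⟨hperp.2 ((hm Y).1 (hp'm hY)), ?_⟩
    exact mem_orthogonal_of_mem_orthogonal_inf hrefl haniso inf_le_left (hperp.2 hYq)
      fun W ⟨hWq, hW⟩ ↦ horth W hW (hperp.1 hWq) Y hY hYq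
  have hXk' : X ∈ orthogonal B (h.toSubmodule ⊔ p') := by
    refine (orthogonal_sup _ _).ge ⟨hperp.2 ((hm X).1 (hpm hX)), ?_⟩
    exact mem_orthogonal_of_mem_orthogonal_inf hrefl haniso inf_le_right (hperp.2 hXq)
      fun W ⟨hWq, hW⟩ ↦ (IsRefl.eq_iff hrefl).1 (horth X hX hXq W hW (hperp.1 hWq))
  have hXYk : ⁅X, Y⁆ ∈ orthogonal B (h.toSubmodule ⊔ p) :=
    lie_mem_orthogonal hinv hkp (Submodule.mem_sup_right hX) hYk
  have hXYk' : ⁅X, Y⁆ ∈ orthogonal B (h.toSubmodule ⊔ p') := by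
    rw [← lie_skew]
    exact neg_mem (lie_mem_orthogonal hinv hkp' (Submodule.mem_sup_right hY) hXk')
  exact ⟨(hm _).2 fun H hH ↦ hperp.1 hXYk H (Submodule.mem_sup_left hH),
    fun W hW ↦ hperp.1 hXYk W (Submodule.mem_sup_right hW.1),
    fun W hW _ ↦ hperp.1 hXYk W (Submodule.mem_sup_right hW),
    fun W hW _ ↦ hperp.1 hXYk' W (Submodule.mem_sup_right hW)⟩

/-- (No GO condition assumed.) For two subalgebras `k = h ⊕ p`, `k′ = h ⊕ p′` containing `h`, with `q = p ∩ p′`, `p₁ = p ∩ q^⊥`, `p₂ = p′ ∩ q^⊥` mutually orthogonal, one has `[p₁, p₂] ⊆ n`, where `n` is the orthogonal complement of `q + p₁ + p₂` in `m`. -/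
theorem stmt_12
    {g : Type*} [LieRing g] [LieAlgebra ℝ g] [FiniteDimensional ℝ g]
    (B : g →ₗ[ℝ] g →ₗ[ℝ] ℝ)
    (hBsymm : ∀ X Y : g, B X Y = B Y X)
    (hBpos : ∀ X : g, X ≠ 0 → 0 < B X X)
    (hBinv : ∀ Z X Y : g, B ⁅Z, X⁆ Y + B X ⁅Z, Y⁆ = 0)
    (h : LieSubalgebra ℝ g)
    (m : Submodule ℝ g) (hm : ∀ X : g, X ∈ m ↔ ∀ H ∈ h, B X H = 0)
    (A : g →ₗ[ℝ] g)
    (hAm : ∀ X ∈ m, A X ∈ m)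
    (hAsymm : ∀ X ∈ m, ∀ Y ∈ m, B (A X) Y = B X (A Y))
    (hApos : ∀ X ∈ m, X ≠ 0 → 0 < B (A X) X)
    (hAequiv : ∀ H ∈ h, ∀ X ∈ m, A ⁅H, X⁆ = ⁅H, A X⁆)
    (p p' : Submodule ℝ g) (hpm : p ≤ m) (hp'm : p' ≤ m)
    (hkp : ∀ X ∈ h.toSubmodule ⊔ p, ∀ Y ∈ h.toSubmodule ⊔ p,
      ⁅X, Y⁆ ∈ h.toSubmodule ⊔ p)
    (hkp' : ∀ X ∈ h.toSubmodule ⊔ p', ∀ Y ∈ h.toSubmodule ⊔ p',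
      ⁅X, Y⁆ ∈ h.toSubmodule ⊔ p')
    (horth : ∀ X ∈ p, (∀ W ∈ p ⊓ p', B X W = 0) →
      ∀ Y ∈ p', (∀ W ∈ p ⊓ p', B Y W = 0) → B X Y = 0) :
    ∀ X ∈ p, (∀ W ∈ p ⊓ p', B X W = 0) →
    ∀ Y ∈ p', (∀ W ∈ p ⊓ p', B Y W = 0) →
      ⁅X, Y⁆ ∈ m ∧
      (∀ W ∈ p ⊓ p', B ⁅X, Y⁆ W = 0) ∧
      (∀ W ∈ p, (∀ V ∈ p ⊓ p', B W V = 0) → B ⁅X, Y⁆ W = 0) ∧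
      (∀ W ∈ p', (∀ V ∈ p ⊓ p', B W V = 0) → B ⁅X, Y⁆ W = 0) :=
  stmt_12_general B hBsymm hBpos hBinv h m hm p p' hpm hp'm hkp hkp' horth
end

section
/- Assume the GO condition holds. Let p_1, p_2 ⊆ m be nonzero A-invariant subspaces with [h, p_1] ⊆ p_1, [h, p_2] ⊆ p_2, ⟨p_1, p_2⟩ = 0, and ⟨[X, Y], v⟩ = 0 for all X ∈ p_1, Y ∈ p_2 and v ∈ p_1 + p_2. Suppose moreover that [u, v] ≠ 0 for every pair of nonzero subspaces u ⊆ p_1 and v ⊆ p_2 with [h, u] ⊆ u and [h, v] ⊆ v (no commuting ad_h-submodules). Then A is scalar on p_1 + p_2: there exists λ > 0 such that A X = λ X for all X ∈ p_1 + p_2. -/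
/-!
Split `p₁` and `p₂` into eigenspaces of `A`; these are `ad h`-invariant because `A` is
`h`-equivariant, so for eigenvalues `α` on `p₁` and `β` on `p₂` the hypothesis on commuting
submodules yields eigenvectors `X`, `Y` with `[X, Y] ≠ 0`. The GO condition for `X + Y` gives
`H ∈ h` with `[H + X + Y, αX + βY] ∈ h ∩ m = 0`, i.e. `[H, αX + βY] = (α - β)[X, Y]`. Pairing
with `[X, Y]` and using ad-invariance and the Jacobi identity, the left side vanishes by the
bracket hypothesis, so `α = β`. Hence `A` has a single eigenvalue on `p₁ + p₂`.
-/

open Module End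

section SymmetricEndomorphism

variable {E : Type*} [AddCommGroup E] [Module ℝ E] [FiniteDimensional ℝ E]
  {b : E →ₗ[ℝ] E →ₗ[ℝ] ℝ}

theorem iSup_eigenspace_eq_top_of_selfAdjoint_wrt_form (hb_symm : ∀ x y, b x y = b y x)
    (hb_pos : ∀ x, x ≠ 0 → 0 < b x x) {T : End ℝ E} (hT : ∀ x y, b (T x) y = b x (T y)) :
    ⨆ μ : ℝ, eigenspace T μ = ⊤ := by
  let c : InnerProductSpace.Core ℝ E :=
    { inner := fun x y => b x y
      conj_inner_symm := fun x y => hb_symm y x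
      re_inner_nonneg := fun x => by
        rcases eq_or_ne x 0 with rfl | hx
        · simp
        · exact (hb_pos x hx).le
      add_left := by simp
      smul_left := by simp
      definite := fun x hx => by_contra fun hx0 => (hb_pos x hx0).ne' hx }
  let : NormedAddCommGroup E := c.toNormedAddCommGroup
  let : InnerProductSpace ℝ E := InnerProductSpace.ofCore c.toCore
  have hTs : T.IsSymmetric := hT
  exact Submodule.orthogonal_eq_bot_iff.mp hTs.orthogonalComplement_iSup_eigenspaces_eq_bot

variable {T : End ℝ E} {p : Submodule ℝ E}

theorem iSup_eigenspace_inf_eq_of_selfAdjoint_wrt_form (hb_symm : ∀ x y, b x y = b y x)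
    (hb_pos : ∀ x, x ≠ 0 → 0 < b x x) (hTp : ∀ x ∈ p, T x ∈ p)
    (hT : ∀ x ∈ p, ∀ y ∈ p, b (T x) y = b x (T y)) :
    ⨆ μ : ℝ, eigenspace T μ ⊓ p = p := by
  have htop : ⨆ μ : ℝ, eigenspace (T.restrict hTp) μ = ⊤ :=
    iSup_eigenspace_eq_top_of_selfAdjoint_wrt_form (b := b.compl₁₂ p.subtype p.subtype)
      (fun x y => hb_symm x y) (fun x hx => hb_pos x (by simpa using hx))
      (fun x y => hT x x.2 y y.2)
  have hmap := congrArg (Submodule.map p.subtype) htop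
  simp only [Submodule.map_iSup, eigenspace, genEigenspace_restrict, Submodule.map_comap_subtype,
    Submodule.map_top, Submodule.range_subtype] at hmap
  simpa only [inf_comm] using hmap

theorem exists_eigenspace_inf_ne_bot (hb_symm : ∀ x y, b x y = b y x)
    (hb_pos : ∀ x, x ≠ 0 → 0 < b x x) (hTp : ∀ x ∈ p, T x ∈ p)
    (hT : ∀ x ∈ p, ∀ y ∈ p, b (T x) y = b x (T y)) (hp : p ≠ ⊥) :
    ∃ μ : ℝ, eigenspace T μ ⊓ p ≠ ⊥ := by
  by_contra! hbot
  rw [← iSup_eigenspace_inf_eq_of_selfAdjoint_wrt_form hb_symm hb_pos hTp hT] at hp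
  simp [hbot] at hp

theorem le_eigenspace_of_forall_eigenspace_inf_ne_bot (hb_symm : ∀ x y, b x y = b y x)
    (hb_pos : ∀ x, x ≠ 0 → 0 < b x x) (hTp : ∀ x ∈ p, T x ∈ p)
    (hT : ∀ x ∈ p, ∀ y ∈ p, b (T x) y = b x (T y)) {α : ℝ}
    (hα : ∀ μ : ℝ, eigenspace T μ ⊓ p ≠ ⊥ → μ = α) :
    p ≤ eigenspace T α := by
  rw [← iSup_eigenspace_inf_eq_of_selfAdjoint_wrt_form hb_symm hb_pos hTp hT]
  refine iSup_le fun μ => ?_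
  rcases eq_or_ne (eigenspace T μ ⊓ p) ⊥ with hμ | hμ
  · exact hμ ▸ bot_le
  · exact hα μ hμ ▸ inf_le_left

end SymmetricEndomorphism

section LieAlgebra

variable {g : Type*} [LieRing g] [LieAlgebra ℝ g] {B : g →ₗ[ℝ] g →ₗ[ℝ] ℝ}
  {h : LieSubalgebra ℝ g} {m p₁ p₂ : Submodule ℝ g} {A : End ℝ g}

theorem eq_zero_of_mem_subalgebra_of_mem_orth (hBpos : ∀ X : g, X ≠ 0 → 0 < B X X)
    (hm : ∀ X : g, X ∈ m ↔ ∀ H ∈ h, B X H = 0) {Z : g} (hZh : Z ∈ h) (hZm : Z ∈ m) : Z = 0 :=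
  by_contra fun hZ => (hBpos Z hZ).ne' ((hm Z).mp hZm Z hZh)

theorem lie_mem_orth_of_orthogonal (hBsymm : ∀ X Y : g, B X Y = B Y X)
    (hBinv : ∀ Z X Y : g, B ⁅Z, X⁆ Y + B X ⁅Z, Y⁆ = 0)
    (hm : ∀ X : g, X ∈ m ↔ ∀ H ∈ h, B X H = 0) (hp₁h : ∀ H ∈ h, ∀ X ∈ p₁, ⁅H, X⁆ ∈ p₁)
    (horth : ∀ X ∈ p₁, ∀ Y ∈ p₂, B X Y = 0) {X Y : g} (hX : X ∈ p₁) (hY : Y ∈ p₂) :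
    ⁅X, Y⁆ ∈ m := by
  refine (hm _).mpr fun H hH => ?_
  have hinv := hBinv X Y H
  rwa [← lie_skew X H, map_neg, hBsymm Y, horth _ (hp₁h H hH X hX) Y hY, neg_zero,
    add_zero] at hinv

theorem form_lie_lie_eq_zero (hBsymm : ∀ X Y : g, B X Y = B Y X)
    (hBinv : ∀ Z X Y : g, B ⁅Z, X⁆ Y + B X ⁅Z, Y⁆ = 0)
    (hp₁h : ∀ H ∈ h, ∀ X ∈ p₁, ⁅H, X⁆ ∈ p₁) (hp₂h : ∀ H ∈ h, ∀ Y ∈ p₂, ⁅H, Y⁆ ∈ p₂)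
    (hbr : ∀ X ∈ p₁, ∀ Y ∈ p₂, ∀ v ∈ p₁ ⊔ p₂, B ⁅X, Y⁆ v = 0)
    {H V X Y : g} (hH : H ∈ h) (hV : V ∈ p₁ ⊔ p₂) (hX : X ∈ p₁) (hY : Y ∈ p₂) :
    B ⁅H, V⁆ ⁅X, Y⁆ = 0 := by
  have hinv := hBinv H V ⁅X, Y⁆
  rwa [leibniz_lie, map_add, hBsymm V, hBsymm V, hbr _ (hp₁h H hH X hX) Y hY V hV,
    hbr X hX _ (hp₂h H hH Y hY) V hV, add_zero, add_zero] at hinv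

theorem eigenvalue_eq_of_lie_ne_zero (hBsymm : ∀ X Y : g, B X Y = B Y X)
    (hBpos : ∀ X : g, X ≠ 0 → 0 < B X X) (hBinv : ∀ Z X Y : g, B ⁅Z, X⁆ Y + B X ⁅Z, Y⁆ = 0)
    (hm : ∀ X : g, X ∈ m ↔ ∀ H ∈ h, B X H = 0) (hGO : ∀ X ∈ m, ∃ H ∈ h, ⁅H + X, A X⁆ ∈ h)
    (hp₁m : p₁ ≤ m) (hp₂m : p₂ ≤ m)
    (hp₁h : ∀ H ∈ h, ∀ X ∈ p₁, ⁅H, X⁆ ∈ p₁) (hp₂h : ∀ H ∈ h, ∀ Y ∈ p₂, ⁅H, Y⁆ ∈ p₂)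
    (horth : ∀ X ∈ p₁, ∀ Y ∈ p₂, B X Y = 0)
    (hbr : ∀ X ∈ p₁, ∀ Y ∈ p₂, ∀ v ∈ p₁ ⊔ p₂, B ⁅X, Y⁆ v = 0)
    {X Y : g} {α β : ℝ} (hX : X ∈ p₁) (hY : Y ∈ p₂) (hAX : A X = α • X) (hAY : A Y = β • Y)
    (hXY : ⁅X, Y⁆ ≠ 0) : α = β := by
  obtain ⟨H, hH, hGO⟩ := hGO (X + Y) (add_mem (hp₁m hX) (hp₂m hY))
  set V := α • X + β • Y
  have hV : V ∈ p₁ ⊔ p₂ :=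
    add_mem (Submodule.smul_mem _ _ (Submodule.mem_sup_left hX))
      (Submodule.smul_mem _ _ (Submodule.mem_sup_right hY))
  have hexpand : ⁅H + (X + Y), A (X + Y)⁆ = ⁅H, V⁆ - (α - β) • ⁅X, Y⁆ := by
    rw [map_add, hAX, hAY]
    simp only [V, add_lie, lie_add, lie_smul, lie_self]
    rw [← lie_skew X Y]
    module
  have hHV : ⁅H, V⁆ ∈ m := by
    simp only [V, lie_add, lie_smul]
    exact add_mem (Submodule.smul_mem _ _ (hp₁m (hp₁h H hH X hX)))
      (Submodule.smul_mem _ _ (hp₂m (hp₂h H hH Y hY)))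
  have hXYm : ⁅X, Y⁆ ∈ m := lie_mem_orth_of_orthogonal hBsymm hBinv hm hp₁h horth hX hY
  have hGO0 : ⁅H, V⁆ - (α - β) • ⁅X, Y⁆ = 0 :=
    eq_zero_of_mem_subalgebra_of_mem_orth hBpos hm (hexpand ▸ hGO)
      (sub_mem hHV (Submodule.smul_mem _ _ hXYm))
  have hform := form_lie_lie_eq_zero hBsymm hBinv hp₁h hp₂h hbr hH hV hX hY
  rw [sub_eq_zero.mp hGO0, map_smul, LinearMap.smul_apply, smul_eq_mul, mul_eq_zero] at hform
  exact sub_eq_zero.mp (hform.resolve_right (hBpos _ hXY).ne')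

theorem lie_mem_eigenspace_inf (hAequiv : ∀ H ∈ h, ∀ X ∈ m, A ⁅H, X⁆ = ⁅H, A X⁆)
    {p : Submodule ℝ g} (hpm : p ≤ m) (hph : ∀ H ∈ h, ∀ X ∈ p, ⁅H, X⁆ ∈ p)
    {μ : ℝ} {H X : g} (hH : H ∈ h) (hX : X ∈ eigenspace A μ ⊓ p) :
    ⁅H, X⁆ ∈ eigenspace A μ ⊓ p := by
  refine Submodule.mem_inf.mpr ⟨?_, hph H hH X hX.2⟩
  rw [mem_eigenspace_iff, hAequiv H hH X (hpm hX.2), mem_eigenspace_iff.mp hX.1, lie_smul]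

theorem eigenvalue_pos (hBpos : ∀ X : g, X ≠ 0 → 0 < B X X)
    (hApos : ∀ X ∈ m, X ≠ 0 → 0 < B (A X) X) {X : g} {μ : ℝ} (hXm : X ∈ m) (hX : X ≠ 0)
    (hAX : A X = μ • X) : 0 < μ := by
  have hpos := hApos X hXm hX
  rw [hAX, map_smul, LinearMap.smul_apply, smul_eq_mul] at hpos
  exact pos_of_mul_pos_left hpos (hBpos X hX).le

end LieAlgebra

theorem stmt_14_general
    {g : Type*} [LieRing g] [LieAlgebra ℝ g] [FiniteDimensional ℝ g]
    (B : g →ₗ[ℝ] g →ₗ[ℝ] ℝ)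
    (hBsymm : ∀ X Y : g, B X Y = B Y X)
    (hBpos : ∀ X : g, X ≠ 0 → 0 < B X X)
    (hBinv : ∀ Z X Y : g, B ⁅Z, X⁆ Y + B X ⁅Z, Y⁆ = 0)
    (h : LieSubalgebra ℝ g)
    (m : Submodule ℝ g) (hm : ∀ X : g, X ∈ m ↔ ∀ H ∈ h, B X H = 0)
    (A : g →ₗ[ℝ] g)
    (hAsymm : ∀ X ∈ m, ∀ Y ∈ m, B (A X) Y = B X (A Y))
    (hApos : ∀ X ∈ m, X ≠ 0 → 0 < B (A X) X)
    (hAequiv : ∀ H ∈ h, ∀ X ∈ m, A ⁅H, X⁆ = ⁅H, A X⁆)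
    (hGO : ∀ X ∈ m, ∃ H ∈ h, ⁅H + X, A X⁆ ∈ h)
    (p1 p2 : Submodule ℝ g) (hp1m : p1 ≤ m) (hp2m : p2 ≤ m)
    (hp1ne : p1 ≠ ⊥) (hp2ne : p2 ≠ ⊥)
    (hAp1 : ∀ X ∈ p1, A X ∈ p1) (hAp2 : ∀ Y ∈ p2, A Y ∈ p2)
    (hp1h : ∀ H ∈ h, ∀ X ∈ p1, ⁅H, X⁆ ∈ p1)
    (hp2h : ∀ H ∈ h, ∀ Y ∈ p2, ⁅H, Y⁆ ∈ p2)
    (horth : ∀ X ∈ p1, ∀ Y ∈ p2, B X Y = 0)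
    (hbr : ∀ X ∈ p1, ∀ Y ∈ p2, ∀ v ∈ p1 ⊔ p2, B ⁅X, Y⁆ v = 0)
    (hnc : ∀ u v : Submodule ℝ g, u ≤ p1 → v ≤ p2 → u ≠ ⊥ → v ≠ ⊥ →
      (∀ H ∈ h, ∀ X ∈ u, ⁅H, X⁆ ∈ u) → (∀ H ∈ h, ∀ Y ∈ v, ⁅H, Y⁆ ∈ v) →
      ∃ X ∈ u, ∃ Y ∈ v, ⁅X, Y⁆ ≠ 0) :
    ∃ lam : ℝ, 0 < lam ∧ ∀ X ∈ p1 ⊔ p2, A X = lam • X := by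
  have hA₁ : ∀ X ∈ p1, ∀ Y ∈ p1, B (A X) Y = B X (A Y) :=
    fun X hX Y hY => hAsymm X (hp1m hX) Y (hp1m hY)
  have hA₂ : ∀ X ∈ p2, ∀ Y ∈ p2, B (A X) Y = B X (A Y) :=
    fun X hX Y hY => hAsymm X (hp2m hX) Y (hp2m hY)
  have key : ∀ α β : ℝ, eigenspace A α ⊓ p1 ≠ ⊥ → eigenspace A β ⊓ p2 ≠ ⊥ → α = β := by
    intro α β hα hβ
    obtain ⟨X, hX, Y, hY, hXY⟩ := hnc _ _ inf_le_right inf_le_right hα hβ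
      (fun _ hH _ hX => lie_mem_eigenspace_inf hAequiv hp1m hp1h hH hX)
      (fun _ hH _ hY => lie_mem_eigenspace_inf hAequiv hp2m hp2h hH hY)
    exact eigenvalue_eq_of_lie_ne_zero hBsymm hBpos hBinv hm hGO hp1m hp2m hp1h hp2h horth hbr
      hX.2 hY.2 (mem_eigenspace_iff.mp hX.1) (mem_eigenspace_iff.mp hY.1) hXY
  obtain ⟨α, hα⟩ := exists_eigenspace_inf_ne_bot hBsymm hBpos hAp1 hA₁ hp1ne
  obtain ⟨β, hβ⟩ := exists_eigenspace_inf_ne_bot hBsymm hBpos hAp2 hA₂ hp2ne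
  have hp₁α : p1 ≤ eigenspace A α :=
    le_eigenspace_of_forall_eigenspace_inf_ne_bot hBsymm hBpos hAp1 hA₁
      fun μ hμ => (key μ β hμ hβ).trans (key α β hα hβ).symm
  have hp₂α : p2 ≤ eigenspace A α :=
    le_eigenspace_of_forall_eigenspace_inf_ne_bot hBsymm hBpos hAp2 hA₂
      fun ν hν => (key α ν hα hν).symm
  obtain ⟨X, hX, hX0⟩ := Submodule.exists_mem_ne_zero_of_ne_bot hp1ne
  exact ⟨α, eigenvalue_pos hBpos hApos (hp1m hX) hX0 (mem_eigenspace_iff.mp (hp₁α hX)),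
    fun Y hY => mem_eigenspace_iff.mp (sup_le hp₁α hp₂α hY)⟩

/-- In a GO-space, if `p₁`, `p₂` are nonzero orthogonal `A`- and `ad h`-invariant subspaces of `m` whose brackets are orthogonal to `p₁ + p₂`, and no nonzero `ad h`-invariant subspaces `u ⊆ p₁`, `v ⊆ p₂` commute, then `A` is a (positive) scalar on `p₁ + p₂`. -/
theorem stmt_14
    {g : Type*} [LieRing g] [LieAlgebra ℝ g] [FiniteDimensional ℝ g]
    (B : g →ₗ[ℝ] g →ₗ[ℝ] ℝ)
    (hBsymm : ∀ X Y : g, B X Y = B Y X)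
    (hBpos : ∀ X : g, X ≠ 0 → 0 < B X X)
    (hBinv : ∀ Z X Y : g, B ⁅Z, X⁆ Y + B X ⁅Z, Y⁆ = 0)
    (h : LieSubalgebra ℝ g)
    (m : Submodule ℝ g) (hm : ∀ X : g, X ∈ m ↔ ∀ H ∈ h, B X H = 0)
    (A : g →ₗ[ℝ] g)
    (hAm : ∀ X ∈ m, A X ∈ m)
    (hAsymm : ∀ X ∈ m, ∀ Y ∈ m, B (A X) Y = B X (A Y))
    (hApos : ∀ X ∈ m, X ≠ 0 → 0 < B (A X) X)
    (hAequiv : ∀ H ∈ h, ∀ X ∈ m, A ⁅H, X⁆ = ⁅H, A X⁆)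
    (hGO : ∀ X ∈ m, ∃ H ∈ h, ⁅H + X, A X⁆ ∈ h)
    (p1 p2 : Submodule ℝ g) (hp1m : p1 ≤ m) (hp2m : p2 ≤ m)
    (hp1ne : p1 ≠ ⊥) (hp2ne : p2 ≠ ⊥)
    (hAp1 : ∀ X ∈ p1, A X ∈ p1) (hAp2 : ∀ Y ∈ p2, A Y ∈ p2)
    (hp1h : ∀ H ∈ h, ∀ X ∈ p1, ⁅H, X⁆ ∈ p1)
    (hp2h : ∀ H ∈ h, ∀ Y ∈ p2, ⁅H, Y⁆ ∈ p2)
    (horth : ∀ X ∈ p1, ∀ Y ∈ p2, B X Y = 0)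
    (hbr : ∀ X ∈ p1, ∀ Y ∈ p2, ∀ v ∈ p1 ⊔ p2, B ⁅X, Y⁆ v = 0)
    (hnc : ∀ u v : Submodule ℝ g, u ≤ p1 → v ≤ p2 → u ≠ ⊥ → v ≠ ⊥ →
      (∀ H ∈ h, ∀ X ∈ u, ⁅H, X⁆ ∈ u) → (∀ H ∈ h, ∀ Y ∈ v, ⁅H, Y⁆ ∈ v) →
      ∃ X ∈ u, ∃ Y ∈ v, ⁅X, Y⁆ ≠ 0) :
    ∃ lam : ℝ, 0 < lam ∧ ∀ X ∈ p1 ⊔ p2, A X = lam • X :=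
  stmt_14_general B hBsymm hBpos hBinv h m hm A hAsymm hApos hAequiv hGO p1 p2 hp1m hp2m hp1ne hp2ne
    hAp1 hAp2 hp1h hp2h horth hbr hnc
end

section
/- For every n ≥ 2, the standard decomposition of R(B_n), namely R_0 = {±(e_i − e_j) : 1 ≤ i < j ≤ n}, R_1 = {±e_i : 1 ≤ i ≤ n}, R_2 = {±(e_i + e_j) : 1 ≤ i < j ≤ n}, is a special decomposition of R(B_n). -/
open scoped RealInnerProductSpace Pointwise

/-- The `i`-th standard basis vector of `ℝ^n`. -/
noncomputable def stdE (n : ℕ) (i : Fin n) : EuclideanSpace ℝ (Fin n) :=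
  EuclideanSpace.single i 1

/-- The long roots `±(e_i − e_j)`, `i < j`, of the standard decomposition. -/
def stdR0 (n : ℕ) : Set (EuclideanSpace ℝ (Fin n)) :=
  {v | ∃ i j : Fin n, i < j ∧ (v = stdE n i - stdE n j ∨ v = -(stdE n i - stdE n j))}

/-- The short roots `±e_i` of `R(B_n)`. -/
def stdR1 (n : ℕ) : Set (EuclideanSpace ℝ (Fin n)) :=
  {v | ∃ i : Fin n, v = stdE n i ∨ v = -stdE n i}

/-- The long roots `±(e_i + e_j)`, `i < j`, of the standard decomposition. -/
def stdR2 (n : ℕ) : Set (EuclideanSpace ℝ (Fin n)) :=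
  {v | ∃ i j : Fin n, i < j ∧ (v = stdE n i + stdE n j ∨ v = -(stdE n i + stdE n j))}

/-- The root system of type `B_n`:  `{±e_i} ∪ {±e_i ± e_j : i < j}`. -/
def RB (n : ℕ) : Set (EuclideanSpace ℝ (Fin n)) := stdR0 n ∪ stdR1 n ∪ stdR2 n

/-- A *special decomposition* of a (finite, symmetric) set `R` of nonzero
vectors of a Euclidean space is a partition `R = R₀ ⊔ R₁ ⊔ R₂` satisfying the
conditions (a)–(h) of Alekseevsky–Nikonorov:
(a) each part is symmetric; (b) `R₀` is closed; (c) some `α ∈ R₁`, `β ∈ R₂`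
have `α + β ∈ R`; (d) every such pair spans a `B₂`-subsystem (8 roots);
(e) for such a pair with `‖α‖ ≠ ‖β‖`, writing `γ`/`δ` for the shorter/longer
root, `γ + δ` lies in the same part as `γ` and `2γ + δ ∈ R₀`; (f) for such a
pair with `‖α‖ = ‖β‖`, `α − β ∈ R` and exactly one of `α ± β` lies in `R₀`,
the other in `R₁ ∪ R₂`; (g) if `α ∈ R₁`, `β ∈ R₂` are both long then
`α ± β ∉ R`; (h) adding an `R₀`-root keeps a root in its part. -/
def IsSpecialDecomposition {E : Type*} [NormedAddCommGroup E]
    [InnerProductSpace ℝ E] (R R0 R1 R2 : Set E) : Prop :=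
  R = R0 ∪ R1 ∪ R2 ∧
  R0 ∩ R1 = ∅ ∧ R0 ∩ R2 = ∅ ∧ R1 ∩ R2 = ∅ ∧
  R0 = -R0 ∧ R1 = -R1 ∧ R2 = -R2 ∧
  (∀ α ∈ R0, ∀ β ∈ R0, α + β ∈ R → α + β ∈ R0) ∧
  (∃ α ∈ R1, ∃ β ∈ R2, α + β ∈ R) ∧
  (∀ α ∈ R1, ∀ β ∈ R2, α + β ∈ R →
    (R ∩ (Submodule.span ℝ ({α, β} : Set E) : Set E)).ncard = 8) ∧
  (∀ α ∈ R1, ∀ β ∈ R2, α + β ∈ R →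
    (‖α‖ < ‖β‖ → α + β ∈ R1 ∧ (2 : ℝ) • α + β ∈ R0) ∧
    (‖β‖ < ‖α‖ → α + β ∈ R2 ∧ α + (2 : ℝ) • β ∈ R0)) ∧
  (∀ α ∈ R1, ∀ β ∈ R2, α + β ∈ R → ‖α‖ = ‖β‖ →
    α - β ∈ R ∧ ((α + β ∈ R0 ∧ α - β ∈ R1 ∪ R2) ∨
      (α - β ∈ R0 ∧ α + β ∈ R1 ∪ R2))) ∧
  (∀ α ∈ R1, ∀ β ∈ R2, (∀ δ ∈ R, ‖δ‖ ≤ ‖α‖) → (∀ δ ∈ R, ‖δ‖ ≤ ‖β‖) →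
    α + β ∉ R ∧ α - β ∉ R) ∧
  (∀ δ ∈ R1 ∪ R2, ∀ η ∈ R0, δ + η ∈ R →
    (δ ∈ R1 → δ + η ∈ R1) ∧ (δ ∈ R2 → δ + η ∈ R2))

/-! The coordinate sum `σ(v) = ∑ v_m` is `0` on `R₀`, `±1` on `R₁` and `±2` on `R₂`, so it
reads off the part of a root; this gives the disjointness and all closure conditions at once.
Short roots have norm `1` and long ones norm `√2`, which makes (f), (g) and half of (e) vacuous.
If `α ∈ R₁`, `β ∈ R₂` and `α + β` is a root, then `⟪α, β⟫ ≤ -1/2` forces `α = ∓e_k` and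
`β = ±(e_k + e_l)`; then `α + β = ±e_l`, `2α + β = ±(e_l - e_k)`, and the roots in
`span {α, β} = span {e_k, e_l}` are the eight vectors `a e_k + b e_l` with `a, b ∈ {-1, 0, 1}`
not both zero. -/

theorem Submodule.span_pair_neg_add {R M : Type*} [CommRing R] [AddCommGroup M] [Module R M]
    (x y : M) : span R {-x, x + y} = span R {x, y} := by
  apply span_eq_span
  · rintro z (rfl | rfl)
    · exact mem_span_pair.2 ⟨-1, 0, by module⟩
    · exact mem_span_pair.2 ⟨1, 1, by module⟩
  · rintro z (rfl | rfl)
    · exact mem_span_pair.2 ⟨-1, 0, by module⟩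
    · exact mem_span_pair.2 ⟨1, 1, by module⟩

theorem Submodule.span_pair_neg_add' {R M : Type*} [CommRing R] [AddCommGroup M] [Module R M]
    (x y : M) : span R {x, -(x + y)} = span R {x, y} := by
  rw [← span_neg, Set.neg_insert, Set.neg_singleton, neg_neg, span_pair_neg_add]

section

variable {n : ℕ} {i j k l : Fin n} {v α β : EuclideanSpace ℝ (Fin n)}

lemma stdE_apply (i m : Fin n) : stdE n i m = if m = i then 1 else 0 := by
  simp [stdE]

lemma inner_stdE_stdE (i j : Fin n) : ⟪stdE n i, stdE n j⟫ = if i = j then 1 else 0 := by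
  simp [stdE, EuclideanSpace.inner_single_left]

lemma norm_stdE (i : Fin n) : ‖stdE n i‖ = 1 := by
  simp [stdE]

lemma norm_stdE_add_stdE_sq (h : i ≠ j) : ‖stdE n i + stdE n j‖ ^ 2 = 2 := by
  rw [norm_add_sq_real, inner_stdE_stdE, if_neg h, norm_stdE, norm_stdE]
  norm_num

lemma norm_stdE_sub_stdE_sq (h : i ≠ j) : ‖stdE n i - stdE n j‖ ^ 2 = 2 := by
  rw [norm_sub_sq_real, inner_stdE_stdE, if_neg h, norm_stdE, norm_stdE]
  norm_num

lemma stdE_add_stdE_mem_stdR2 (h : i ≠ j) : stdE n i + stdE n j ∈ stdR2 n := by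
  rcases h.lt_or_gt with h | h
  · exact ⟨i, j, h, .inl rfl⟩
  · exact ⟨j, i, h, .inl (add_comm _ _)⟩

lemma stdE_sub_stdE_mem_stdR0 (h : i ≠ j) : stdE n i - stdE n j ∈ stdR0 n := by
  rcases h.lt_or_gt with h | h
  · exact ⟨i, j, h, .inl rfl⟩
  · exact ⟨j, i, h, .inr (neg_sub _ _).symm⟩

lemma neg_stdR0 : -stdR0 n = stdR0 n := by
  ext v
  simp [stdR0, neg_eq_iff_eq_neg, or_comm]

lemma neg_stdR1 : -stdR1 n = stdR1 n := by
  ext v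
  simp [stdR1, neg_eq_iff_eq_neg, or_comm]

lemma neg_stdR2 : -stdR2 n = stdR2 n := by
  ext v
  simp [stdR2, neg_eq_iff_eq_neg, or_comm]

@[simp] lemma neg_mem_RB_iff : -v ∈ RB n ↔ v ∈ RB n := by
  rw [← Set.mem_neg, RB, Set.union_neg, Set.union_neg, neg_stdR0, neg_stdR1, neg_stdR2]

@[simp] lemma stdE_mem_RB (i : Fin n) : stdE n i ∈ RB n :=
  .inl (.inr ⟨i, .inl rfl⟩)

@[simp] lemma stdE_add_stdE_mem_RB (h : i ≠ j) : stdE n i + stdE n j ∈ RB n :=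
  .inr (stdE_add_stdE_mem_stdR2 h)

@[simp] lemma stdE_sub_stdE_mem_RB (h : i ≠ j) : stdE n i - stdE n j ∈ RB n :=
  .inl (.inl (stdE_sub_stdE_mem_stdR0 h))

lemma norm_sq_of_mem_stdR1 (hv : v ∈ stdR1 n) : ‖v‖ ^ 2 = 1 := by
  obtain ⟨i, rfl | rfl⟩ := hv <;> simp [norm_stdE]

lemma norm_sq_of_mem_stdR2 (hv : v ∈ stdR2 n) : ‖v‖ ^ 2 = 2 := by
  obtain ⟨i, j, hij, rfl | rfl⟩ := hv <;> simp only [norm_neg, norm_stdE_add_stdE_sq hij.ne]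

lemma norm_sq_of_mem_stdR0 (hv : v ∈ stdR0 n) : ‖v‖ ^ 2 = 2 := by
  obtain ⟨i, j, hij, rfl | rfl⟩ := hv <;> simp only [norm_neg, norm_stdE_sub_stdE_sq hij.ne]

lemma norm_sq_of_mem_RB (hv : v ∈ RB n) : ‖v‖ ^ 2 = 1 ∨ ‖v‖ ^ 2 = 2 := by
  rcases hv with (hv | hv) | hv
  · exact .inr (norm_sq_of_mem_stdR0 hv)
  · exact .inl (norm_sq_of_mem_stdR1 hv)
  · exact .inr (norm_sq_of_mem_stdR2 hv)

lemma norm_lt_norm_of_mem_stdR1_of_mem_stdR2 (hα : α ∈ stdR1 n) (hβ : β ∈ stdR2 n) :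
    ‖α‖ < ‖β‖ :=
  lt_of_pow_lt_pow_left₀ 2 (norm_nonneg β) <| by
    rw [norm_sq_of_mem_stdR1 hα, norm_sq_of_mem_stdR2 hβ]
    norm_num

lemma apply_mem_of_mem_RB (hv : v ∈ RB n) (m : Fin n) : v m ∈ ({-1, 0, 1} : Set ℝ) := by
  rcases hv with (⟨i, j, hij, rfl | rfl⟩ | ⟨i, rfl | rfl⟩) | ⟨i, j, hij, rfl | rfl⟩ <;>
    simp only [PiLp.add_apply, PiLp.sub_apply, PiLp.neg_apply, stdE_apply] <;>
    split_ifs <;> subst_vars <;> simp_all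

noncomputable def coordSum (n : ℕ) : EuclideanSpace ℝ (Fin n) →ₗ[ℝ] ℝ :=
  ∑ m, (EuclideanSpace.proj m : EuclideanSpace ℝ (Fin n) →L[ℝ] ℝ).toLinearMap

lemma coordSum_stdE (i : Fin n) : coordSum n (stdE n i) = 1 := by
  simp [coordSum, stdE_apply]

lemma coordSum_of_mem_stdR0 (hv : v ∈ stdR0 n) : coordSum n v = 0 := by
  obtain ⟨i, j, -, rfl | rfl⟩ := hv <;> simp [coordSum_stdE]

lemma abs_coordSum_of_mem_stdR1 (hv : v ∈ stdR1 n) : |coordSum n v| = 1 := by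
  obtain ⟨i, rfl | rfl⟩ := hv <;> simp [coordSum_stdE]

lemma abs_coordSum_of_mem_stdR2 (hv : v ∈ stdR2 n) : |coordSum n v| = 2 := by
  obtain ⟨i, j, -, rfl | rfl⟩ := hv <;> norm_num [coordSum_stdE]

lemma coordSum_add_of_mem_stdR0 (hβ : β ∈ stdR0 n) : coordSum n (α + β) = coordSum n α := by
  rw [map_add, coordSum_of_mem_stdR0 hβ, add_zero]

lemma stdR0_inter_stdR1 : stdR0 n ∩ stdR1 n = ∅ :=
  Set.eq_empty_of_forall_notMem fun _ ⟨h0, h1⟩ => by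
    simpa [coordSum_of_mem_stdR0 h0] using abs_coordSum_of_mem_stdR1 h1

lemma stdR0_inter_stdR2 : stdR0 n ∩ stdR2 n = ∅ :=
  Set.eq_empty_of_forall_notMem fun _ ⟨h0, h2⟩ => by
    simpa [coordSum_of_mem_stdR0 h0] using abs_coordSum_of_mem_stdR2 h2

lemma stdR1_inter_stdR2 : stdR1 n ∩ stdR2 n = ∅ :=
  Set.eq_empty_of_forall_notMem fun _ ⟨h1, h2⟩ => by
    have h := (abs_coordSum_of_mem_stdR1 h1).symm.trans (abs_coordSum_of_mem_stdR2 h2)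
    norm_num at h

lemma mem_stdR0_of_mem_RB (hv : v ∈ RB n) (h : coordSum n v = 0) : v ∈ stdR0 n := by
  rcases hv with (hv | hv) | hv
  · exact hv
  · simpa [h] using abs_coordSum_of_mem_stdR1 hv
  · simpa [h] using abs_coordSum_of_mem_stdR2 hv

lemma mem_stdR1_of_mem_RB (hv : v ∈ RB n) (h : |coordSum n v| = 1) : v ∈ stdR1 n := by
  rcases hv with (hv | hv) | hv
  · simp [coordSum_of_mem_stdR0 hv] at h
  · exact hv
  · norm_num [abs_coordSum_of_mem_stdR2 hv] at h

lemma mem_stdR2_of_mem_RB (hv : v ∈ RB n) (h : |coordSum n v| = 2) : v ∈ stdR2 n := by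
  rcases hv with (hv | hv) | hv
  · simp [coordSum_of_mem_stdR0 hv] at h
  · norm_num [abs_coordSum_of_mem_stdR1 hv] at h
  · exact hv

noncomputable def rootCoeffsB2 : Finset (ℝ × ℝ) :=
  (({-1, 0, 1} : Finset ℝ) ×ˢ {-1, 0, 1}).erase (0, 0)

lemma card_rootCoeffsB2 : rootCoeffsB2.card = 8 := by
  rw [rootCoeffsB2, Finset.card_erase_of_mem (by simp), Finset.card_product]
  norm_num

lemma mem_rootCoeffsB2 {a b : ℝ} :
    (a, b) ∈ rootCoeffsB2 ↔
      a ∈ ({-1, 0, 1} : Set ℝ) ∧ b ∈ ({-1, 0, 1} : Set ℝ) ∧ (a, b) ≠ 0 := by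
  simp [rootCoeffsB2, and_comm, and_assoc]

lemma RB_inter_span_stdE_pair (hkl : k ≠ l) :
    RB n ∩ (Submodule.span ℝ {stdE n k, stdE n l} : Set (EuclideanSpace ℝ (Fin n))) =
      (fun p : ℝ × ℝ => p.1 • stdE n k + p.2 • stdE n l) '' rootCoeffsB2 := by
  ext v
  constructor
  · rintro ⟨hv, hspan⟩
    obtain ⟨a, b, rfl⟩ := Submodule.mem_span_pair.1 hspan
    have ha := apply_mem_of_mem_RB hv k
    have hb := apply_mem_of_mem_RB hv l
    simp only [PiLp.add_apply, PiLp.smul_apply, stdE_apply, if_true, if_neg hkl, if_neg hkl.symm,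
      smul_eq_mul, mul_one, mul_zero, add_zero, zero_add] at ha hb
    refine ⟨(a, b), mem_rootCoeffsB2.2 ⟨ha, hb, fun hab => ?_⟩, rfl⟩
    obtain ⟨rfl, rfl⟩ := Prod.mk_eq_zero.1 hab
    simpa using norm_sq_of_mem_RB hv
  · rintro ⟨⟨a, b⟩, hp, rfl⟩
    refine ⟨?_, Submodule.mem_span_pair.2 ⟨a, b, rfl⟩⟩
    obtain ⟨rfl | rfl | rfl, rfl | rfl | rfl, hab⟩ := mem_rootCoeffsB2.1 hp <;>
      simp [hkl, hkl.symm, neg_add_eq_sub, ← sub_eq_add_neg, ← neg_add', -neg_add_rev]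
        at hab ⊢

lemma injective_smul_stdE_add_smul_stdE (hkl : k ≠ l) :
    Function.Injective (fun p : ℝ × ℝ => p.1 • stdE n k + p.2 • stdE n l) := by
  rintro ⟨a, b⟩ ⟨c, d⟩ h
  have hk := congrArg (· k) h
  have hl := congrArg (· l) h
  simp only [PiLp.add_apply, PiLp.smul_apply, stdE_apply, hkl, hkl.symm] at hk hl
  simp_all

lemma ncard_RB_inter_span_stdE_pair (hkl : k ≠ l) :
    (RB n ∩ (Submodule.span ℝ {stdE n k, stdE n l} : Set (EuclideanSpace ℝ (Fin n)))).ncard =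
      8 := by
  rw [RB_inter_span_stdE_pair hkl,
    Set.ncard_image_of_injective _ (injective_smul_stdE_add_smul_stdE hkl),
    Set.ncard_coe_finset, card_rootCoeffsB2]

lemma exists_stdE_of_add_mem_RB (hα : α ∈ stdR1 n) (hβ : β ∈ stdR2 n)
    (h : α + β ∈ RB n) :
    ∃ k l, k ≠ l ∧ (α = -stdE n k ∧ β = stdE n k + stdE n l ∨
      α = stdE n k ∧ β = -(stdE n k + stdE n l)) := by
  have hinner : ⟪α, β⟫ ≤ -1 / 2 := by
    have := norm_sq_of_mem_RB h
    rw [norm_add_sq_real, norm_sq_of_mem_stdR1 hα, norm_sq_of_mem_stdR2 hβ] at this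
    rcases this with h | h <;> linarith
  obtain ⟨i, rfl | rfl⟩ := hα <;> obtain ⟨k, l, hkl, rfl | rfl⟩ := hβ <;>
    simp only [inner_neg_left, inner_neg_right, inner_add_right, inner_stdE_stdE] at hinner
  · split_ifs at hinner <;> norm_num at hinner
  · obtain rfl | rfl : i = k ∨ i = l := by
      by_contra! hne
      norm_num [hne.1, hne.2] at hinner
    · exact ⟨i, l, hkl.ne, .inr ⟨rfl, rfl⟩⟩
    · exact ⟨i, k, hkl.ne', .inr ⟨rfl, by rw [add_comm]⟩⟩
  · obtain rfl | rfl : i = k ∨ i = l := by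
      by_contra! hne
      norm_num [hne.1, hne.2] at hinner
    · exact ⟨i, l, hkl.ne, .inl ⟨rfl, rfl⟩⟩
    · exact ⟨i, k, hkl.ne', .inl ⟨rfl, add_comm _ _⟩⟩
  · split_ifs at hinner <;> norm_num at hinner

lemma ncard_RB_inter_span_of_add_mem_RB (hα : α ∈ stdR1 n) (hβ : β ∈ stdR2 n)
    (h : α + β ∈ RB n) :
    (RB n ∩ (Submodule.span ℝ {α, β} : Set (EuclideanSpace ℝ (Fin n)))).ncard = 8 := by
  obtain ⟨k, l, hkl, ⟨rfl, rfl⟩ | ⟨rfl, rfl⟩⟩ := exists_stdE_of_add_mem_RB hα hβ h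
  · rw [Submodule.span_pair_neg_add, ncard_RB_inter_span_stdE_pair hkl]
  · rw [Submodule.span_pair_neg_add', ncard_RB_inter_span_stdE_pair hkl]

lemma add_mem_stdR1_of_add_mem_RB (hα : α ∈ stdR1 n) (hβ : β ∈ stdR2 n)
    (h : α + β ∈ RB n) :
    α + β ∈ stdR1 n ∧ (2 : ℝ) • α + β ∈ stdR0 n := by
  obtain ⟨k, l, hkl, ⟨rfl, rfl⟩ | ⟨rfl, rfl⟩⟩ := exists_stdE_of_add_mem_RB hα hβ h
  · refine ⟨⟨l, .inl (by module)⟩, ?_⟩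
    convert stdE_sub_stdE_mem_stdR0 hkl.symm using 1
    module
  · refine ⟨⟨l, .inr (by module)⟩, ?_⟩
    convert stdE_sub_stdE_mem_stdR0 hkl using 1
    module

end

/-- For every `n ≥ 2` the standard decomposition of `R(B_n)`
is a special decomposition. -/
theorem stmt_16 (n : ℕ) (hn : 2 ≤ n) :
    IsSpecialDecomposition (RB n) (stdR0 n) (stdR1 n) (stdR2 n) := by
  have hlt := @norm_lt_norm_of_mem_stdR1_of_mem_stdR2 n
  refine ⟨rfl, stdR0_inter_stdR1, stdR0_inter_stdR2, stdR1_inter_stdR2,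
    neg_stdR0.symm, neg_stdR1.symm, neg_stdR2.symm, ?_, ?_,
    fun α hα β hβ h => ncard_RB_inter_span_of_add_mem_RB hα hβ h,
    fun α hα β hβ h => ⟨fun _ => add_mem_stdR1_of_add_mem_RB hα hβ h,
      fun h' => absurd h' (hlt hα hβ).not_gt⟩,
    fun α hα β hβ _ h => absurd h (hlt hα hβ).ne,
    fun α hα β hβ hα' _ => absurd (hα' β (.inr hβ)) (hlt hα hβ).not_ge, ?_⟩
  · intro α hα β hβ h
    exact mem_stdR0_of_mem_RB h (by rw [coordSum_add_of_mem_stdR0 hβ, coordSum_of_mem_stdR0 hα])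
  · let i : Fin n := ⟨0, by omega⟩
    let j : Fin n := ⟨1, by omega⟩
    have hij : i < j := Fin.mk_lt_mk.2 zero_lt_one
    exact ⟨stdE n i, ⟨i, .inl rfl⟩, -(stdE n i + stdE n j), ⟨i, j, hij, .inr rfl⟩,
      .inl (.inr ⟨j, .inr (by module)⟩)⟩
  · rintro δ - η hη h
    have hσ := coordSum_add_of_mem_stdR0 (α := δ) hη
    exact ⟨fun h1 => mem_stdR1_of_mem_RB h (hσ ▸ abs_coordSum_of_mem_stdR1 h1),
      fun h2 => mem_stdR2_of_mem_RB h (hσ ▸ abs_coordSum_of_mem_stdR2 h2)⟩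
end

section
/- Let n ≥ 2. Every special decomposition of R(B_n) is conjugate to the standard one: for any special decomposition R(B_n) = R_0 ⊔ R_1 ⊔ R_2 there exists a linear isometry f of ℝ^n with f(R(B_n)) = R(B_n) such that f(R_0) = {±(e_i − e_j) : 1 ≤ i < j ≤ n} and either f(R_1) = {±e_i : 1 ≤ i ≤ n} and f(R_2) = {±(e_i + e_j) : 1 ≤ i < j ≤ n}, or f(R_1) = {±(e_i + e_j) : 1 ≤ i < j ≤ n} and f(R_2) = {±e_i : 1 ≤ i ≤ n}. -/
open scoped RealInnerProductSpace Pointwise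

/-!
By (h), adding an `R0`-root never moves a root of `R1` into `R2`; with (f) this forces
`‖α‖ ≠ ‖β‖` whenever `α ∈ R1`, `β ∈ R2` and `α + β` is a root. So, after possibly swapping `R1`
and `R2`, a short root `σ e_s ∈ R1` is adjacent to a long root `-σ e_s + τ e_t ∈ R2`.
Conditions (e), (g), (h) then put every short root into `R1`, put the partner `a e_u - b e_v` of
every long root `a e_u + b e_v ∈ R2` into `R0`, and propagate `R2`-roots from one pair of indices
to all pairs compatibly. This yields signs `ε_i` with `ε_i e_i + ε_j e_j ∈ R2` for all `i ≠ j`,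
and the coordinate sign change `x ↦ (ε_i x_i)_i` is the required isometry.
-/

def IsSign (a : ℝ) : Prop := a = 1 ∨ a = -1

namespace IsSign

variable {a b : ℝ}

lemma one : IsSign 1 := Or.inl rfl

lemma neg (ha : IsSign a) : IsSign (-a) := by
  rcases ha with rfl | rfl <;> simp [IsSign]

lemma mul (ha : IsSign a) (hb : IsSign b) : IsSign (a * b) := by
  rcases ha with rfl | rfl <;> rcases hb with rfl | rfl <;> simp [IsSign]

lemma mul_self (ha : IsSign a) : a * a = 1 := by
  rcases ha with rfl | rfl <;> norm_num

lemma abs_eq (ha : IsSign a) : |a| = 1 := by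
  rcases ha with rfl | rfl <;> norm_num

lemma eq_or_eq_neg (ha : IsSign a) (hb : IsSign b) : a = b ∨ a = -b := by
  rcases ha with rfl | rfl <;> rcases hb with rfl | rfl <;> norm_num

end IsSign

lemma smul_mem_iff_of_isSign {E : Type*} [AddCommGroup E] [Module ℝ E] {S : Set E}
    (hS : ∀ x ∈ S, -x ∈ S) {a b : ℝ} (ha : IsSign a) (hb : IsSign b) (x : E) :
    a • x ∈ S ↔ b • x ∈ S := by
  have key : ∀ y, -y ∈ S ↔ y ∈ S := fun y => ⟨fun h => by simpa using hS _ h, hS y⟩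
  rcases ha with rfl | rfl <;> rcases hb with rfl | rfl <;> simp [key]

lemma Set.image_eq_of_mapsTo_of_partition {X Y : Type*} {f : X → Y} {g : Y → X}
    (hgf : Function.LeftInverse g f) (hfg : Function.RightInverse g f)
    {A₀ A₁ A₂ : Set X} {B₀ B₁ B₂ : Set Y}
    (h₀₁ : Disjoint A₀ A₁) (h₀₂ : Disjoint A₀ A₂) (h₁₂ : Disjoint A₁ A₂)
    (hf : Set.MapsTo f (A₀ ∪ A₁ ∪ A₂) (B₀ ∪ B₁ ∪ B₂))
    (hg₀ : Set.MapsTo g B₀ A₀) (hg₁ : Set.MapsTo g B₁ A₁) (hg₂ : Set.MapsTo g B₂ A₂) :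
    f '' A₀ = B₀ ∧ f '' A₁ = B₁ ∧ f '' A₂ = B₂ := by
  have back : ∀ {x A B}, Set.MapsTo g B A → f x ∈ B → x ∈ A :=
    fun {x _ _} hg hx => hgf x ▸ hg hx
  have onto : ∀ {A B}, Set.MapsTo g B A → B ⊆ f '' A := fun hg y hy => ⟨g y, hg hy, hfg y⟩
  refine ⟨(Set.image_subset_iff.2 fun x hx => ?_).antisymm (onto hg₀),
    (Set.image_subset_iff.2 fun x hx => ?_).antisymm (onto hg₁),
    (Set.image_subset_iff.2 fun x hx => ?_).antisymm (onto hg₂)⟩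
  · rcases hf (Or.inl (Or.inl hx)) with (h | h) | h
    · exact h
    · exact (Set.disjoint_left.1 h₀₁ hx (back hg₁ h)).elim
    · exact (Set.disjoint_left.1 h₀₂ hx (back hg₂ h)).elim
  · rcases hf (Or.inl (Or.inr hx)) with (h | h) | h
    · exact (Set.disjoint_left.1 h₀₁ (back hg₀ h) hx).elim
    · exact h
    · exact (Set.disjoint_left.1 h₁₂ hx (back hg₂ h)).elim
  · rcases hf (Or.inr hx) with (h | h) | h
    · exact (Set.disjoint_left.1 h₀₂ (back hg₀ h) hx).elim
    · exact (Set.disjoint_left.1 h₁₂ (back hg₁ h) hx).elim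
    · exact h

lemma forall_ne_of_symm_of_step {ι : Type*} {P : ι → ι → Prop}
    (symm : ∀ p q, P p q → P q p) (step : ∀ p q r, p ≠ q → p ≠ r → q ≠ r → P p q → P q r)
    {s t : ι} (hst : s ≠ t) (h : P s t) : ∀ i j, i ≠ j → P i j := by
  have hs : ∀ j, j ≠ s → P s j := by
    intro j hjs
    by_cases hjt : j = t
    · exact hjt ▸ h
    · exact step t s j (Ne.symm hst) (Ne.symm hjt) (Ne.symm hjs) (symm s t h)
  intro i j hij
  by_cases his : i = s
  · exact his ▸ hs j (his ▸ Ne.symm hij)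
  by_cases hjs : j = s
  · exact hjs ▸ symm s i (hs i his)
  · exact step s i j (Ne.symm his) (Ne.symm hjs) hij (hs i his)

lemma exists_linearIsometryEquiv_apply_eq_mul {ι : Type*} [Fintype ι] (ε : ι → ℝ)
    (hε : ∀ i, |ε i| = 1) :
    ∃ F : EuclideanSpace ℝ ι ≃ₗᵢ[ℝ] EuclideanSpace ℝ ι, ∀ x i, F x i = ε i * x i := by
  refine ⟨LinearIsometryEquiv.piLpCongrRight 2 fun i =>
    { LinearEquiv.smulOfNeZero ℝ ℝ (ε i) (by simp [← abs_ne_zero, hε]) with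
      norm_map' := fun x => by simp [hε] }, fun x i => rfl⟩

namespace IsSpecialDecomposition

variable {E : Type*} [NormedAddCommGroup E] [InnerProductSpace ℝ E] {R R0 R1 R2 : Set E}

lemma mem_iff (hR : IsSpecialDecomposition R R0 R1 R2) {x : E} :
    x ∈ R ↔ x ∈ R0 ∨ x ∈ R1 ∨ x ∈ R2 := by
  rw [hR.1]; simp only [Set.mem_union, or_assoc]

lemma mem_of_mem₀ (hR : IsSpecialDecomposition R R0 R1 R2) {x : E} (hx : x ∈ R0) : x ∈ R :=
  hR.mem_iff.2 (Or.inl hx)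

lemma mem_of_mem₁ (hR : IsSpecialDecomposition R R0 R1 R2) {x : E} (hx : x ∈ R1) : x ∈ R :=
  hR.mem_iff.2 (Or.inr (Or.inl hx))

lemma mem_of_mem₂ (hR : IsSpecialDecomposition R R0 R1 R2) {x : E} (hx : x ∈ R2) : x ∈ R :=
  hR.mem_iff.2 (Or.inr (Or.inr hx))

lemma disjoint₀₁ (hR : IsSpecialDecomposition R R0 R1 R2) : Disjoint R0 R1 :=
  Set.disjoint_iff_inter_eq_empty.2 hR.2.1

lemma disjoint₀₂ (hR : IsSpecialDecomposition R R0 R1 R2) : Disjoint R0 R2 :=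
  Set.disjoint_iff_inter_eq_empty.2 hR.2.2.1

lemma disjoint₁₂ (hR : IsSpecialDecomposition R R0 R1 R2) : Disjoint R1 R2 :=
  Set.disjoint_iff_inter_eq_empty.2 hR.2.2.2.1

lemma neg_mem₀ (hR : IsSpecialDecomposition R R0 R1 R2) {x : E} (hx : x ∈ R0) : -x ∈ R0 := by
  rw [hR.2.2.2.2.1]; simpa using hx

lemma neg_mem₁ (hR : IsSpecialDecomposition R R0 R1 R2) {x : E} (hx : x ∈ R1) : -x ∈ R1 := by
  rw [hR.2.2.2.2.2.1]; simpa using hx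

lemma neg_mem₂ (hR : IsSpecialDecomposition R R0 R1 R2) {x : E} (hx : x ∈ R2) : -x ∈ R2 := by
  rw [hR.2.2.2.2.2.2.1]; simpa using hx

lemma neg_mem (hR : IsSpecialDecomposition R R0 R1 R2) {x : E} (hx : x ∈ R) : -x ∈ R := by
  rcases hR.mem_iff.1 hx with h | h | h
  exacts [hR.mem_of_mem₀ (hR.neg_mem₀ h), hR.mem_of_mem₁ (hR.neg_mem₁ h),
    hR.mem_of_mem₂ (hR.neg_mem₂ h)]

lemma exists_add_mem (hR : IsSpecialDecomposition R R0 R1 R2) : ∃ α ∈ R1, ∃ β ∈ R2, α + β ∈ R :=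
  hR.2.2.2.2.2.2.2.2.1

lemma add_mem₁_of_norm_lt (hR : IsSpecialDecomposition R R0 R1 R2) {α β : E} (hα : α ∈ R1)
    (hβ : β ∈ R2) (hαβ : α + β ∈ R) (hlt : ‖α‖ < ‖β‖) : α + β ∈ R1 ∧ (2 : ℝ) • α + β ∈ R0 :=
  (hR.2.2.2.2.2.2.2.2.2.2.1 α hα β hβ hαβ).1 hlt

lemma add_notMem_of_long (hR : IsSpecialDecomposition R R0 R1 R2) {α β : E} (hα : α ∈ R1)
    (hβ : β ∈ R2) (hαl : ∀ δ ∈ R, ‖δ‖ ≤ ‖α‖) (hβl : ∀ δ ∈ R, ‖δ‖ ≤ ‖β‖) : α + β ∉ R ∧ α - β ∉ R :=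
  hR.2.2.2.2.2.2.2.2.2.2.2.2.1 α hα β hβ hαl hβl

lemma add_mem₁_of_mem₀ (hR : IsSpecialDecomposition R R0 R1 R2) {δ η : E} (hδ : δ ∈ R1)
    (hη : η ∈ R0) (hδη : δ + η ∈ R) : δ + η ∈ R1 :=
  (hR.2.2.2.2.2.2.2.2.2.2.2.2.2 δ (Or.inl hδ) η hη hδη).1 hδ

lemma add_mem₂_of_mem₀ (hR : IsSpecialDecomposition R R0 R1 R2) {δ η : E} (hδ : δ ∈ R2)
    (hη : η ∈ R0) (hδη : δ + η ∈ R) : δ + η ∈ R2 :=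
  (hR.2.2.2.2.2.2.2.2.2.2.2.2.2 δ (Or.inr hδ) η hη hδη).2 hδ

/-- Condition (f) never applies: by (h), moving `β` (or `-β`) by the `R0`-root among `α ± β`
would put `α` into `R2`. -/
lemma norm_ne (hR : IsSpecialDecomposition R R0 R1 R2) {α β : E} (hα : α ∈ R1) (hβ : β ∈ R2)
    (hαβ : α + β ∈ R) : ‖α‖ ≠ ‖β‖ := by
  intro hnorm
  obtain ⟨-, hsum | hdiff⟩ := hR.2.2.2.2.2.2.2.2.2.2.2.1 α hα β hβ hαβ hnorm
  · have := hR.add_mem₂_of_mem₀ (hR.neg_mem₂ hβ) hsum.1 (by simpa using hR.mem_of_mem₁ hα)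
    exact Set.disjoint_left.1 hR.disjoint₁₂ hα (by simpa using this)
  · have := hR.add_mem₂_of_mem₀ hβ hdiff.1 (by simpa using hR.mem_of_mem₁ hα)
    exact Set.disjoint_left.1 hR.disjoint₁₂ hα (by simpa using this)

lemma swap (hR : IsSpecialDecomposition R R0 R1 R2) : IsSpecialDecomposition R R0 R2 R1 := by
  have hnorm_ne := @hR.norm_ne
  have hneg := @hR.neg_mem
  obtain ⟨hpart, h01, h02, h12, hs0, hs1, hs2, hcl, ⟨α, hα, β, hβ, hαβ⟩, hB2, he, -, hg, hh⟩ := hR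
  refine ⟨by rw [hpart, Set.union_right_comm _ R1], h02, h01, by rwa [Set.inter_comm], hs0, hs2,
    hs1, hcl, ⟨β, hβ, α, hα, by rwa [add_comm]⟩, fun α hα β hβ hαβ => ?_,
    fun α hα β hβ hαβ => ?_, fun α hα β hβ hαβ hnorm => ?_, fun α hα β hβ hαl hβl => ?_,
    fun δ hδ η hη hδη => (hh δ hδ.symm η hη hδη).symm⟩
  · rw [Set.pair_comm]; exact hB2 β hβ α hα (by rwa [add_comm])
  · rw [add_comm α, add_comm α, add_comm _ β]
    exact (he β hβ α hα (by rwa [add_comm])).symm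
  · exact absurd hnorm.symm (hnorm_ne hβ hα (by rwa [add_comm]))
  · obtain ⟨hadd, hsub⟩ := hg β hβ α hα hβl hαl
    exact ⟨by rwa [add_comm], fun h => hsub (by simpa using hneg h)⟩

end IsSpecialDecomposition

section RootSystemB

variable {n : ℕ}

local notation "E" => stdE n

lemma smul_stdE_mem_RB {a : ℝ} (ha : IsSign a) (i : Fin n) : a • E i ∈ RB n := by
  rcases ha with rfl | rfl
  · exact Or.inl (Or.inr ⟨i, Or.inl (one_smul _ _)⟩)
  · exact Or.inl (Or.inr ⟨i, Or.inr (neg_one_smul _ _)⟩)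

lemma smul_stdE_add_smul_stdE_mem_RB {i j : Fin n} {a b : ℝ} (hij : i ≠ j) (ha : IsSign a)
    (hb : IsSign b) : a • E i + b • E j ∈ RB n := by
  wlog hlt : i < j generalizing i j a b
  · rw [add_comm]; exact this hij.symm hb ha (hij.lt_or_gt.resolve_left hlt)
  rcases ha with rfl | rfl <;> rcases hb with rfl | rfl
  · exact Or.inr ⟨i, j, hlt, Or.inl (by module)⟩
  · exact Or.inl (Or.inl ⟨i, j, hlt, Or.inl (by module)⟩)
  · exact Or.inl (Or.inl ⟨i, j, hlt, Or.inr (by module)⟩)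
  · exact Or.inr ⟨i, j, hlt, Or.inr (by module)⟩

lemma exists_eq_of_mem_RB {x : EuclideanSpace ℝ (Fin n)} (hx : x ∈ RB n) :
    (∃ i a, IsSign a ∧ x = a • E i) ∨
      ∃ i j a b, i ≠ j ∧ IsSign a ∧ IsSign b ∧ x = a • E i + b • E j := by
  rcases hx with (⟨i, j, hij, rfl | rfl⟩ | ⟨i, rfl | rfl⟩) | ⟨i, j, hij, rfl | rfl⟩
  · exact Or.inr ⟨i, j, 1, -1, hij.ne, .one, .neg .one, by module⟩
  · exact Or.inr ⟨i, j, -1, 1, hij.ne, .neg .one, .one, by module⟩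
  · exact Or.inl ⟨i, 1, .one, by module⟩
  · exact Or.inl ⟨i, -1, .neg .one, by module⟩
  · exact Or.inr ⟨i, j, 1, 1, hij.ne, .one, .one, by module⟩
  · exact Or.inr ⟨i, j, -1, -1, hij.ne, .neg .one, .neg .one, by module⟩

lemma inner_smul_stdE_left (a : ℝ) (i : Fin n) (x : EuclideanSpace ℝ (Fin n)) :
    ⟪a • E i, x⟫ = a * x i := by
  simp [stdE, real_inner_smul_left, EuclideanSpace.inner_single_left]

lemma norm_smul_stdE {a : ℝ} (ha : IsSign a) (i : Fin n) : ‖a • E i‖ = 1 := by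
  simp [stdE, norm_smul, ha.abs_eq]

lemma norm_smul_stdE_add_smul_stdE {i j : Fin n} {a b : ℝ} (hij : i ≠ j) (ha : IsSign a)
    (hb : IsSign b) : ‖a • E i + b • E j‖ = √2 := by
  rw [← Real.sqrt_sq (norm_nonneg _), norm_add_sq_real, inner_smul_stdE_left,
    norm_smul_stdE ha, norm_smul_stdE hb]
  norm_num [stdE, hij]

lemma norm_le_sqrt_two_of_mem_RB {x : EuclideanSpace ℝ (Fin n)} (hx : x ∈ RB n) : ‖x‖ ≤ √2 := by
  rcases exists_eq_of_mem_RB hx with ⟨i, a, ha, rfl⟩ | ⟨i, j, a, b, hij, ha, hb, rfl⟩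
  · exact (norm_smul_stdE ha i).trans_le Real.one_lt_sqrt_two.le
  · rw [norm_smul_stdE_add_smul_stdE hij ha hb]

/-- A root has squared norm at most `2`, while `‖σ e_s + w‖² = 3 + 2σ w_s` for a long root `w`;
so `w_s = -σ`. -/
lemma exists_eq_of_smul_stdE_add_mem_RB {s u v : Fin n} {σ a b : ℝ} (huv : u ≠ v)
    (hσ : IsSign σ) (ha : IsSign a) (hb : IsSign b)
    (h : σ • E s + (a • E u + b • E v) ∈ RB n) :
    ∃ t τ, IsSign τ ∧ s ≠ t ∧ a • E u + b • E v = -σ • E s + τ • E t := by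
  set w := a • E u + b • E v with hw
  have hnorm : ‖σ • E s + w‖ ^ 2 = 3 + 2 * (σ * w s) := by
    rw [norm_add_sq_real, inner_smul_stdE_left, norm_smul_stdE hσ,
      norm_smul_stdE_add_smul_stdE huv ha hb]
    norm_num; ring
  have hle : σ * w s ≤ -1 / 2 := by
    have := (Real.le_sqrt (norm_nonneg _) zero_le_two).1 (norm_le_sqrt_two_of_mem_RB h)
    linarith
  have hws : w s = (if s = u then a else 0) + (if s = v then b else 0) := by
    simp [hw, stdE]
  by_cases hsu : s = u
  · subst hsu
    have : a = -σ := by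
      rw [hws, if_pos rfl, if_neg huv, add_zero] at hle
      rcases hσ with rfl | rfl <;> rcases ha with rfl | rfl <;> norm_num at hle <;> norm_num
    exact ⟨v, b, hb, huv, by rw [hw, this]⟩
  by_cases hsv : s = v
  · subst hsv
    have : b = -σ := by
      rw [hws, if_neg hsu, if_pos rfl, zero_add] at hle
      rcases hσ with rfl | rfl <;> rcases hb with rfl | rfl <;> norm_num at hle <;> norm_num
    exact ⟨u, a, ha, huv.symm, by rw [hw, this, add_comm]⟩
  · rw [hws, if_neg hsu, if_neg hsv] at hle
    norm_num at hle

lemma exists_short_long_of_norm_lt {x y : EuclideanSpace ℝ (Fin n)} (hx : x ∈ RB n) (hy : y ∈ RB n)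
    (hlt : ‖x‖ < ‖y‖) :
    (∃ i a, IsSign a ∧ x = a • E i) ∧
      ∃ i j a b, i ≠ j ∧ IsSign a ∧ IsSign b ∧ y = a • E i + b • E j := by
  rcases exists_eq_of_mem_RB hx with hxs | ⟨i, j, a, b, hij, ha, hb, rfl⟩
  · rcases exists_eq_of_mem_RB hy with ⟨k, c, hc, rfl⟩ | hyl
    · obtain ⟨i, a, ha, rfl⟩ := hxs
      rw [norm_smul_stdE ha, norm_smul_stdE hc] at hlt
      exact absurd hlt (lt_irrefl 1)
    · exact ⟨hxs, hyl⟩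
  · rw [norm_smul_stdE_add_smul_stdE hij ha hb] at hlt
    exact absurd (norm_le_sqrt_two_of_mem_RB hy) hlt.not_ge

lemma norm_le_norm_smul_stdE_add_smul_stdE {x : EuclideanSpace ℝ (Fin n)} (hx : x ∈ RB n)
    {i j : Fin n} {a b : ℝ} (hij : i ≠ j) (ha : IsSign a) (hb : IsSign b) :
    ‖x‖ ≤ ‖a • E i + b • E j‖ :=
  (norm_smul_stdE_add_smul_stdE hij ha hb).symm ▸ norm_le_sqrt_two_of_mem_RB hx

lemma mapsTo_RB_of_apply_stdE {F : EuclideanSpace ℝ (Fin n) ≃ₗᵢ[ℝ] EuclideanSpace ℝ (Fin n)}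
    {ε : Fin n → ℝ} (hεs : ∀ i, IsSign (ε i)) (hFE : ∀ i, F (E i) = ε i • E i) :
    Set.MapsTo F (RB n) (RB n) := by
  intro x hx
  rcases exists_eq_of_mem_RB hx with ⟨i, a, ha, rfl⟩ | ⟨i, j, a, b, hij, ha, hb, rfl⟩
  · rw [map_smul, hFE, smul_smul]
    exact smul_stdE_mem_RB (ha.mul (hεs i)) i
  · rw [map_add, map_smul, map_smul, hFE, hFE, smul_smul, smul_smul]
    exact smul_stdE_add_smul_stdE_mem_RB hij (ha.mul (hεs i)) (hb.mul (hεs j))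

end RootSystemB

namespace IsSpecialDecomposition

section RootSystemB

variable {n : ℕ} {R0 R1 R2 : Set (EuclideanSpace ℝ (Fin n))}

local notation "E" => stdE n

lemma false_of_short_mem₁_of_short_mem₂ (hR : IsSpecialDecomposition (RB n) R0 R1 R2)
    {i k : Fin n} {σ τ : ℝ} (hσ : IsSign σ) (hτ : IsSign τ) (h₁ : σ • E i ∈ R1)
    (h₂ : τ • E k ∈ R2) : False := by
  by_cases hik : i = k
  · subst hik
    exact Set.disjoint_left.1 hR.disjoint₁₂ h₁
      ((smul_mem_iff_of_isSign (fun _ => hR.neg_mem₂) hτ hσ (E i)).1 h₂)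
  · exact hR.norm_ne h₁ h₂ (smul_stdE_add_smul_stdE_mem_RB hik hσ hτ)
      (by rw [norm_smul_stdE hσ, norm_smul_stdE hτ])

lemma smul_stdE_mem₁ (hR : IsSpecialDecomposition (RB n) R0 R1 R2) {s t : Fin n} {σ τ : ℝ}
    (hσ : IsSign σ) (hτ : IsSign τ) (hst : s ≠ t) (hα : σ • E s ∈ R1)
    (hβ : -σ • E s + τ • E t ∈ R2) {j : Fin n} {ρ : ℝ} (hρ : IsSign ρ) : ρ • E j ∈ R1 := by
  have hsum : σ • E s + (-σ • E s + τ • E t) = τ • E t := by module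
  have ht : τ • E t ∈ R1 := by
    have hlt : ‖σ • E s‖ < ‖-σ • E s + τ • E t‖ := by
      rw [norm_smul_stdE hσ, norm_smul_stdE_add_smul_stdE hst hσ.neg hτ]
      exact Real.one_lt_sqrt_two
    simpa [hsum] using
      (hR.add_mem₁_of_norm_lt hα hβ (by rw [hsum]; exact smul_stdE_mem_RB hτ t) hlt).1
  have hne : ∀ {k c}, IsSign c → c • E k ∈ R1 → ρ • E j ∈ R0 → j ≠ k := by
    rintro k c hc h₁ h₀ rfl
    exact Set.disjoint_left.1 hR.disjoint₀₁
      ((smul_mem_iff_of_isSign (fun _ => hR.neg_mem₀) hρ hc (E j)).1 h₀) h₁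
  -- by (h), a short root in `R0` would move `α` to a long root of `R1` adjacent to `β`, against (g)
  have h₀ : ρ • E j ∉ R0 := by
    intro h₀
    have hjs := hne hσ hα h₀
    have hjt := hne hτ ht h₀
    have hlong : σ • E s + ρ • E j ∈ R1 :=
      hR.add_mem₁_of_mem₀ hα h₀ (smul_stdE_add_smul_stdE_mem_RB (Ne.symm hjs) hσ hρ)
    refine (hR.add_notMem_of_long hlong hβ
      (fun δ hδ => norm_le_norm_smul_stdE_add_smul_stdE hδ (Ne.symm hjs) hσ hρ)
      (fun δ hδ => norm_le_norm_smul_stdE_add_smul_stdE hδ hst hσ.neg hτ)).1 ?_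
    rw [show σ • E s + ρ • E j + (-σ • E s + τ • E t) = ρ • E j + τ • E t by module]
    exact smul_stdE_add_smul_stdE_mem_RB hjt hρ hτ
  rcases hR.mem_iff.1 (smul_stdE_mem_RB hρ j) with h | h | h
  · exact absurd h h₀
  · exact h
  · exact (hR.false_of_short_mem₁_of_short_mem₂ hσ hρ hα h).elim

lemma mem₀_of_mem₂ (hR : IsSpecialDecomposition (RB n) R0 R1 R2)
    (hshort : ∀ (j : Fin n) (ρ : ℝ), IsSign ρ → ρ • E j ∈ R1) {u v : Fin n} {a b : ℝ} (huv : u ≠ v)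
    (ha : IsSign a) (hb : IsSign b) (h : a • E u + b • E v ∈ R2) : a • E u + -b • E v ∈ R0 := by
  have hsum : -a • E u + (a • E u + b • E v) = b • E v := by module
  have hlt : ‖-a • E u‖ < ‖a • E u + b • E v‖ := by
    rw [norm_smul_stdE ha.neg, norm_smul_stdE_add_smul_stdE huv ha hb]
    exact Real.one_lt_sqrt_two
  have := hR.neg_mem₀ (hR.add_mem₁_of_norm_lt (hshort u (-a) ha.neg) h
    (by rw [hsum]; exact smul_stdE_mem_RB hb v) hlt).2
  rwa [show -((2 : ℝ) • (-a • E u) + (a • E u + b • E v)) = a • E u + -b • E v by module] at this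

lemma false_of_long_mem₁_of_long_mem₂ (hR : IsSpecialDecomposition (RB n) R0 R1 R2)
    {p q r : Fin n} (hpq : p ≠ q) (hpr : p ≠ r) (hqr : q ≠ r) {a b c d : ℝ} (ha : IsSign a)
    (hb : IsSign b) (hc : IsSign c) (hd : IsSign d) (h₁ : a • E q + b • E r ∈ R1)
    (h₂ : c • E p + d • E q ∈ R2) : False := by
  have hlong := hR.add_notMem_of_long h₁ h₂
    (fun δ hδ => norm_le_norm_smul_stdE_add_smul_stdE hδ hqr ha hb)
    (fun δ hδ => norm_le_norm_smul_stdE_add_smul_stdE hδ hpq hc hd)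
  rcases ha.eq_or_eq_neg hd with rfl | rfl
  · refine hlong.2 ?_
    rw [show a • E q + b • E r - (c • E p + a • E q) = -c • E p + b • E r by module]
    exact smul_stdE_add_smul_stdE_mem_RB hpr hc.neg hb
  · refine hlong.1 ?_
    rw [show -d • E q + b • E r + (c • E p + d • E q) = c • E p + b • E r by module]
    exact smul_stdE_add_smul_stdE_mem_RB hpr hc hb

lemma exists_mem₂_of_mem₂ (hR : IsSpecialDecomposition (RB n) R0 R1 R2)
    (hshort : ∀ (j : Fin n) (ρ : ℝ), IsSign ρ → ρ • E j ∈ R1) {p q r : Fin n} (hpq : p ≠ q)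
    (hpr : p ≠ r) (hqr : q ≠ r) {c d : ℝ} (hc : IsSign c) (hd : IsSign d)
    (h : c • E p + d • E q ∈ R2) : ∃ a b, IsSign a ∧ IsSign b ∧ a • E q + b • E r ∈ R2 := by
  -- otherwise all four roots `±e_q ± e_r` lie in `R0`, so by (h) both `c e_p ± e_r` lie in `R2`,
  -- although `mem₀_of_mem₂` puts one of them in `R0`
  by_contra! hno
  have h₀ : ∀ {a b}, IsSign a → IsSign b → a • E q + b • E r ∈ R0 := by
    intro a b ha hb
    rcases hR.mem_iff.1 (smul_stdE_add_smul_stdE_mem_RB hqr ha hb) with h' | h' | h'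
    · exact h'
    · exact (hR.false_of_long_mem₁_of_long_mem₂ hpq hpr hqr ha hb hc hd h' h).elim
    · exact absurd h' (hno a b ha hb)
  have hsum : ∀ {b}, IsSign b → c • E p + b • E r ∈ R2 := by
    intro b hb
    have heq : c • E p + d • E q + (-d • E q + b • E r) = c • E p + b • E r := by module
    rw [← heq]
    exact hR.add_mem₂_of_mem₀ h (h₀ hd.neg hb)
      (by rw [heq]; exact smul_stdE_add_smul_stdE_mem_RB hpr hc hb)
  exact Set.disjoint_left.1 hR.disjoint₀₂
    (hR.mem₀_of_mem₂ hshort hpr hc IsSign.one (hsum IsSign.one)) (hsum IsSign.one.neg)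

lemma mem₂_of_mem₂_of_mem₂ (hR : IsSpecialDecomposition (RB n) R0 R1 R2)
    (hshort : ∀ (j : Fin n) (ρ : ℝ), IsSign ρ → ρ • E j ∈ R1) {i j k : Fin n} (hik : i ≠ k)
    (hjk : j ≠ k) {a b c : ℝ} (ha : IsSign a) (hb : IsSign b) (hc : IsSign c)
    (h₁ : a • E i + b • E j ∈ R2) (h₂ : b • E j + c • E k ∈ R2) : a • E i + c • E k ∈ R2 := by
  have h₀ := hR.neg_mem₀ (hR.mem₀_of_mem₂ hshort hjk hb hc h₂)
  have heq : a • E i + b • E j + -(b • E j + -c • E k) = a • E i + c • E k := by module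
  rw [← heq]
  exact hR.add_mem₂_of_mem₀ h₁ h₀ (by rw [heq]; exact smul_stdE_add_smul_stdE_mem_RB hik ha hc)

lemma exists_sign_mem₂ (hR : IsSpecialDecomposition (RB n) R0 R1 R2)
    (hshort : ∀ (j : Fin n) (ρ : ℝ), IsSign ρ → ρ • E j ∈ R1) {p q : Fin n} (hpq : p ≠ q)
    {c d : ℝ} (hc : IsSign c) (hd : IsSign d) (h : c • E p + d • E q ∈ R2) :
    ∃ ε : Fin n → ℝ, (∀ i, IsSign (ε i)) ∧ ∀ i j, i ≠ j → ε i • E i + ε j • E j ∈ R2 := by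
  have hpair : ∀ i j, i ≠ j → ∃ a b, IsSign a ∧ IsSign b ∧ a • E i + b • E j ∈ R2 :=
    forall_ne_of_symm_of_step (fun _ _ ⟨a, b, ha, hb, h⟩ => ⟨b, a, hb, ha, by rwa [add_comm]⟩)
      (fun _ _ _ hpq hpr hqr ⟨_, _, ha, hb, h⟩ => hR.exists_mem₂_of_mem₂ hshort hpq hpr hqr ha hb h)
      hpq ⟨c, d, hc, hd, h⟩
  have hp : ∀ j, j ≠ p → ∃ b, IsSign b ∧ (1 : ℝ) • E p + b • E j ∈ R2 := by
    intro j hj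
    obtain ⟨a, b, ha, hb, h⟩ := hpair p j (Ne.symm hj)
    rcases ha with rfl | rfl
    · exact ⟨b, hb, h⟩
    · refine ⟨-b, hb.neg, ?_⟩
      rw [show (1 : ℝ) • E p + -b • E j = -((-1 : ℝ) • E p + b • E j) by module]
      exact hR.neg_mem₂ h
  choose! ε hεs hε using hp
  refine ⟨Function.update ε p 1, fun i => ?_, fun i j hij => ?_⟩
  · by_cases hi : i = p
    · simpa [hi] using IsSign.one
    · simpa [hi] using hεs i hi
  by_cases hi : i = p
  · subst hi
    rw [Function.update_self, Function.update_of_ne (Ne.symm hij)]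
    exact hε j (Ne.symm hij)
  by_cases hj : j = p
  · subst hj
    rw [Function.update_self, Function.update_of_ne hij, add_comm]
    exact hε i hi
  rw [Function.update_of_ne hi, Function.update_of_ne hj]
  exact hR.mem₂_of_mem₂_of_mem₂ hshort hij (Ne.symm hj) (hεs i hi) IsSign.one (hεs j hj)
    (by rw [add_comm]; exact hε i hi) (hε j hj)

lemma exists_isometry_of_sign_mem₂ (hR : IsSpecialDecomposition (RB n) R0 R1 R2)
    (hshort : ∀ (j : Fin n) (ρ : ℝ), IsSign ρ → ρ • E j ∈ R1) {ε : Fin n → ℝ}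
    (hεs : ∀ i, IsSign (ε i)) (hε : ∀ i j, i ≠ j → ε i • E i + ε j • E j ∈ R2) :
    ∃ F : EuclideanSpace ℝ (Fin n) ≃ₗᵢ[ℝ] EuclideanSpace ℝ (Fin n),
      F '' RB n = RB n ∧ F '' R0 = stdR0 n ∧ F '' R1 = stdR1 n ∧ F '' R2 = stdR2 n := by
  obtain ⟨F, hF⟩ := exists_linearIsometryEquiv_apply_eq_mul ε fun i => (hεs i).abs_eq
  have hFE : ∀ i, F (E i) = ε i • E i := fun i => by
    ext k
    by_cases hk : k = i <;> simp [hF, stdE, hk]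
  have hFF : Function.Involutive F := fun x => by
    ext k
    simp [hF, ← mul_assoc, (hεs k).mul_self]
  have hF₀ : ∀ i j, i ≠ j → F (E i - E j) ∈ R0 := fun i j hij => by
    rw [map_sub, hFE, hFE, sub_eq_add_neg, ← neg_smul]
    exact hR.mem₀_of_mem₂ hshort hij (hεs i) (hεs j) (hε i j hij)
  have hmaps₀ : Set.MapsTo F (stdR0 n) R0 := by
    rintro _ ⟨i, j, hij, rfl | rfl⟩
    · exact hF₀ i j hij.ne
    · exact (map_neg F _).symm ▸ hR.neg_mem₀ (hF₀ i j hij.ne)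
  have hmaps₁ : Set.MapsTo F (stdR1 n) R1 := by
    rintro _ ⟨i, rfl | rfl⟩
    · exact (hFE i).symm ▸ hshort i _ (hεs i)
    · exact (map_neg F _).symm ▸ (hFE i).symm ▸ hR.neg_mem₁ (hshort i _ (hεs i))
  have hmaps₂ : Set.MapsTo F (stdR2 n) R2 := by
    have hF₂ : ∀ i j, i ≠ j → F (E i + E j) ∈ R2 := fun i j hij => by
      rw [map_add, hFE, hFE]
      exact hε i j hij
    rintro _ ⟨i, j, hij, rfl | rfl⟩
    · exact hF₂ i j hij.ne
    · exact (map_neg F _).symm ▸ hR.neg_mem₂ (hF₂ i j hij.ne)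
  have hRB : Set.MapsTo F (R0 ∪ R1 ∪ R2) (stdR0 n ∪ stdR1 n ∪ stdR2 n) :=
    hR.1 ▸ mapsTo_RB_of_apply_stdE hεs hFE
  obtain ⟨h₀, h₁, h₂⟩ := Set.image_eq_of_mapsTo_of_partition hFF.leftInverse hFF.rightInverse
    hR.disjoint₀₁ hR.disjoint₀₂ hR.disjoint₁₂ hRB hmaps₀ hmaps₁ hmaps₂
  refine ⟨F, ?_, h₀, h₁, h₂⟩
  rw [hR.1, Set.image_union, Set.image_union, h₀, h₁, h₂, ← hR.1]
  rfl

lemma exists_isometry_of_norm_lt (hR : IsSpecialDecomposition (RB n) R0 R1 R2)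
    {α β : EuclideanSpace ℝ (Fin n)} (hα : α ∈ R1) (hβ : β ∈ R2) (hαβ : α + β ∈ RB n)
    (hlt : ‖α‖ < ‖β‖) :
    ∃ F : EuclideanSpace ℝ (Fin n) ≃ₗᵢ[ℝ] EuclideanSpace ℝ (Fin n),
      F '' RB n = RB n ∧ F '' R0 = stdR0 n ∧ F '' R1 = stdR1 n ∧ F '' R2 = stdR2 n := by
  obtain ⟨⟨s, σ, hσ, rfl⟩, ⟨u, v, a, b, huv, ha, hb, rfl⟩⟩ :=
    exists_short_long_of_norm_lt (hR.mem_of_mem₁ hα) (hR.mem_of_mem₂ hβ) hlt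
  obtain ⟨t, τ, hτ, hst, hβt⟩ := exists_eq_of_smul_stdE_add_mem_RB huv hσ ha hb hαβ
  rw [hβt] at hβ
  have hshort j ρ (hρ : IsSign ρ) : ρ • E j ∈ R1 := hR.smul_stdE_mem₁ hσ hτ hst hα hβ hρ
  obtain ⟨ε, hεs, hε⟩ := hR.exists_sign_mem₂ hshort hst hσ.neg hτ hβ
  exact hR.exists_isometry_of_sign_mem₂ hshort hεs hε

end RootSystemB

end IsSpecialDecomposition

theorem stmt_19_general (n : ℕ)
    (R0 R1 R2 : Set (EuclideanSpace ℝ (Fin n)))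
    (hdec : IsSpecialDecomposition (RB n) R0 R1 R2) :
    ∃ f : EuclideanSpace ℝ (Fin n) ≃ₗᵢ[ℝ] EuclideanSpace ℝ (Fin n),
      f '' RB n = RB n ∧ f '' R0 = stdR0 n ∧
        ((f '' R1 = stdR1 n ∧ f '' R2 = stdR2 n) ∨
          (f '' R1 = stdR2 n ∧ f '' R2 = stdR1 n)) := by
  obtain ⟨α, hα, β, hβ, hαβ⟩ := hdec.exists_add_mem
  rcases (hdec.norm_ne hα hβ hαβ).lt_or_gt with hlt | hgt
  · obtain ⟨f, hRB, h₀, h₁, h₂⟩ := hdec.exists_isometry_of_norm_lt hα hβ hαβ hlt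
    exact ⟨f, hRB, h₀, Or.inl ⟨h₁, h₂⟩⟩
  · obtain ⟨f, hRB, h₀, h₂, h₁⟩ :=
      hdec.swap.exists_isometry_of_norm_lt hβ hα (by rwa [add_comm]) hgt
    exact ⟨f, hRB, h₀, Or.inr ⟨h₁, h₂⟩⟩

/-- For `n ≥ 2` every special decomposition of `R(B_n)` is
conjugate, by a linear isometry preserving `R(B_n)`, to the standard one
(up to swapping `R₁` and `R₂`). -/
theorem stmt_19 (n : ℕ) (hn : 2 ≤ n)
    (R0 R1 R2 : Set (EuclideanSpace ℝ (Fin n)))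
    (hdec : IsSpecialDecomposition (RB n) R0 R1 R2) :
    ∃ f : EuclideanSpace ℝ (Fin n) ≃ₗᵢ[ℝ] EuclideanSpace ℝ (Fin n),
      f '' RB n = RB n ∧ f '' R0 = stdR0 n ∧
        ((f '' R1 = stdR1 n ∧ f '' R2 = stdR2 n) ∨
          (f '' R1 = stdR2 n ∧ f '' R2 = stdR1 n)) :=
  stmt_19_general n R0 R1 R2 hdec
end
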